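/- arXiv:2506.11159 — 8 statements merged into one kernel-verified Lean document; each statement's English description precedes it below -/
import Mathlib

section
/- Any two minimal generating sets of a fixed G-transfer system T have the same cardinality. Consequently there is a well-defined map m : Tr(G) → ℕ assigning to each transfer system the size of any of its minimal generating sets. -/
/-- Conjugate of a subgroup: `H^g`. -/
def conjSub {G : Type*} [Group G] (g : G) (H : Subgroup G) : Subgroup G :=
  H.map (MulAut.conj g).toMonoidHom

/-- A `G`-transfer system: a set of pairs `(K, H)` of subgroups with `K ≤ H`, containing all
identity pairs and closed under composition, conjugation, and restriction. -/
def IsTransferSystem {G : Type*} [Group G] (T : Set (Subgroup G × Subgroup G)) : Prop :=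
  (∀ p ∈ T, p.1 ≤ p.2) ∧
  (∀ H : Subgroup G, (H, H) ∈ T) ∧
  (∀ L K H : Subgroup G, (L, K) ∈ T → (K, H) ∈ T → (L, H) ∈ T) ∧
  (∀ K H : Subgroup G, (K, H) ∈ T → ∀ g : G, (conjSub g K, conjSub g H) ∈ T) ∧
  (∀ K H : Subgroup G, (K, H) ∈ T → ∀ L : Subgroup G, L ≤ H → (K ⊓ L, L) ∈ T)

/-- Rubin's closure: the smallest transfer system containing `S`. -/
def tsGen {G : Type*} [Group G] (S : Set (Subgroup G × Subgroup G)) :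
    Set (Subgroup G × Subgroup G) :=
  ⋂₀ {T | IsTransferSystem T ∧ S ⊆ T}

/-- `S` is a minimal generating set (of non-identity intervals) for the transfer system `T`. -/
def IsMinGenSet {G : Type*} [Group G] (S T : Set (Subgroup G × Subgroup G)) : Prop :=
  S ⊆ T ∧ (∀ p ∈ S, p.1 ≠ p.2) ∧ tsGen S = T ∧ ∀ s ∈ S, tsGen (S \ {s}) ⊂ T

/-- Total exponent (number of prime factors with multiplicity) of `n`. -/
def bigOmega (n : ℕ) : ℕ := n.primeFactorsList.length

/-!
Write `p ≼ t` when `p` is a restriction of a conjugate of `t`; this is a preorder on pairs of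
subgroups under which every transfer system is closed downwards. A transfer system `T` is
generated by its indecomposable pairs, and an indecomposable pair of `⟨S⟩` lies below some
element of `S`. Splitting `t ∈ T` at an intermediate subgroup `M` shows that a `≼`-maximal
indecomposable `m ≼ t` has bottom of the same order as the bottom of `t`, so it lies below the
lower piece; hence two maximal indecomposables below a common `t ∈ T` are `≼`-equivalent.

If `S` is a minimal generating set and `s ∈ S`, an indecomposable of `T` outside `⟨S \ {s}⟩`
lies below a maximal indecomposable `w s` with `w s ≼ s` and `w s` below no other element of
`S`. For any generating set `R`, picking for each `s` some `r ∈ R` above `w s` is then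
injective, so `|S| ≤ |R|`.
-/

open Pointwise

section TransferSystems

variable {G : Type*} [Group G]

namespace Subgroup

lemma card_smul_conjAct (g : ConjAct G) (H : Subgroup G) :
    Nat.card (g • H : Subgroup G) = Nat.card H :=
  (Nat.card_congr (H.equivSMul g).toEquiv).symm

lemma card_lt_card_of_lt [Finite G] {K H : Subgroup G} (h : K < H) :
    Nat.card K < Nat.card H :=
  (card_le_of_le h.le).lt_of_ne fun e => h.ne (eq_of_le_of_card_ge h.le e.ge)

end Subgroup

def IsRestrictedConj (p t : Subgroup G × Subgroup G) : Prop :=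
  ∃ g : ConjAct G, ∃ L ≤ g • t.2, p = (g • t.1 ⊓ L, L)

namespace IsRestrictedConj

variable {p q t : Subgroup G × Subgroup G}

lemma fst_ne_snd (hp : IsRestrictedConj p t) (hne : p.1 ≠ p.2) : t.1 ≠ t.2 := by
  obtain ⟨g, L, hL, rfl⟩ := hp
  intro h
  rw [← h] at hL
  exact hne (inf_eq_right.2 hL)

lemma trans (hpq : IsRestrictedConj p q) (hqt : IsRestrictedConj q t) :
    IsRestrictedConj p t := by
  obtain ⟨a, L, hL, rfl⟩ := hpq
  obtain ⟨b, M, hM, rfl⟩ := hqt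
  refine ⟨a * b, L, hL.trans ?_, ?_⟩
  · rw [mul_smul]
    exact Subgroup.pointwise_smul_le_pointwise_smul_iff.2 hM
  · simp only [Subgroup.smul_inf, mul_smul, inf_assoc, inf_eq_right.2 hL]

lemma inf_of_le {K H L : Subgroup G} (hL : L ≤ H) : IsRestrictedConj (K ⊓ L, L) (K, H) :=
  ⟨1, L, by simpa using hL, by simp⟩

lemma refl (ht : t.1 ≤ t.2) : IsRestrictedConj t t := by
  simpa [inf_eq_left.2 ht] using inf_of_le (K := t.1) (H := t.2) le_rfl

lemma smul (g : ConjAct G) {K H : Subgroup G} (h : K ≤ H) :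
    IsRestrictedConj (g • K, g • H) (K, H) :=
  ⟨g, g • H, le_rfl, by simpa using h⟩

variable [Finite G]

lemma card_fst_le (hp : IsRestrictedConj p t) : Nat.card p.1 ≤ Nat.card t.1 := by
  obtain ⟨g, L, -, rfl⟩ := hp
  exact (Subgroup.card_le_of_le inf_le_left).trans_eq (Subgroup.card_smul_conjAct g t.1)

lemma card_snd_le (hp : IsRestrictedConj p t) : Nat.card p.2 ≤ Nat.card t.2 := by
  obtain ⟨g, L, hL, rfl⟩ := hp
  exact (Subgroup.card_le_of_le hL).trans_eq (Subgroup.card_smul_conjAct g t.2)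

lemma symm_of_card_le (hp : IsRestrictedConj p t) (ht : t.1 ≤ t.2)
    (hc : Nat.card t.2 ≤ Nat.card p.2) : IsRestrictedConj t p := by
  obtain ⟨g, L, hL, rfl⟩ := hp
  obtain rfl : L = g • t.2 :=
    Subgroup.eq_of_le_of_card_ge hL (by rwa [Subgroup.card_smul_conjAct])
  have hgt : g • t.1 ⊓ g • t.2 = g • t.1 := inf_eq_left.2 (by simpa using ht)
  simpa [hgt] using smul g⁻¹ (Subgroup.pointwise_smul_le_pointwise_smul_iff (a := g) |>.2 ht)

end IsRestrictedConj

variable {T S R : Set (Subgroup G × Subgroup G)} {p t m : Subgroup G × Subgroup G}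

namespace IsTransferSystem

lemma le_of_mem (hT : IsTransferSystem T) (hp : p ∈ T) : p.1 ≤ p.2 := hT.1 p hp

lemma smul_mem (hT : IsTransferSystem T) {K H : Subgroup G} (h : (K, H) ∈ T) (g : ConjAct G) :
    (g • K, g • H) ∈ T :=
  -- `conjSub g` is definitionally the pointwise action of `ConjAct.toConjAct g`
  hT.2.2.2.1 K H h (ConjAct.ofConjAct g)

lemma mem_of_isRestrictedConj (hT : IsTransferSystem T) (ht : t ∈ T)
    (hp : IsRestrictedConj p t) : p ∈ T := by
  obtain ⟨g, L, hL, rfl⟩ := hp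
  exact hT.2.2.2.2 _ _ (hT.smul_mem ht g) L hL

lemma card_fst_lt [Finite G] (hT : IsTransferSystem T) {K M : Subgroup G} (h : (K, M) ∈ T)
    (hne : K ≠ M) : Nat.card K < Nat.card M :=
  Subgroup.card_lt_card_of_lt ((hT.le_of_mem h).lt_of_ne hne)

end IsTransferSystem

lemma isTransferSystem_setOf_le :
    IsTransferSystem {p : Subgroup G × Subgroup G | p.1 ≤ p.2} := by
  refine ⟨fun _ hp => hp, ?_, ?_, ?_, ?_⟩ <;> simp only [Set.mem_ofPred_eq]
  · exact fun _ => le_rfl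
  · exact fun _ _ _ => le_trans
  · exact fun _ _ h g =>
      (Subgroup.pointwise_smul_le_pointwise_smul_iff (a := ConjAct.toConjAct g)).2 h
  · exact fun _ _ _ _ _ => inf_le_right

lemma subset_tsGen (S : Set (Subgroup G × Subgroup G)) : S ⊆ tsGen S :=
  fun _ hp _ hT => hT.2 hp

lemma tsGen_subset (hT : IsTransferSystem T) (h : S ⊆ T) : tsGen S ⊆ T :=
  fun _ hp => hp T ⟨hT, h⟩

lemma isTransferSystem_tsGen (hS : ∀ p ∈ S, p.1 ≤ p.2) : IsTransferSystem (tsGen S) :=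
  ⟨fun _ hp => hp _ ⟨isTransferSystem_setOf_le, hS⟩,
    fun H _ hT => hT.1.2.1 H,
    fun L K H h₁ h₂ _ hT => hT.1.2.2.1 L K H (h₁ _ hT) (h₂ _ hT),
    fun K H h g _ hT => hT.1.2.2.2.1 K H (h _ hT) g,
    fun K H h L hL _ hT => hT.1.2.2.2.2 K H (h _ hT) L hL⟩

def IsIndecomposable (T : Set (Subgroup G × Subgroup G)) (p : Subgroup G × Subgroup G) : Prop :=
  p ∈ T ∧ p.1 ≠ p.2 ∧ ∀ M, (p.1, M) ∈ T → (M, p.2) ∈ T → M = p.1 ∨ M = p.2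

def IsMaxIndecomposable (T : Set (Subgroup G × Subgroup G)) (m : Subgroup G × Subgroup G) :
    Prop :=
  IsIndecomposable T m ∧
    ∀ u, IsIndecomposable T u → IsRestrictedConj m u → IsRestrictedConj u m

theorem IsTransferSystem.induction_on_indecomposable [Finite G]
    (hT : IsTransferSystem T)
    {P : Subgroup G × Subgroup G → Prop} (refl : ∀ H, P (H, H))
    (indec : ∀ t, IsIndecomposable T t → P t)
    (decomp : ∀ K M H, (K, M) ∈ T → (M, H) ∈ T → K ≠ M → M ≠ H →
      P (K, M) → P (M, H) → P (K, H))
    (ht : t ∈ T) : P t := by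
  induction hn : Nat.card t.2 - Nat.card t.1 using Nat.strong_induction_on generalizing t with
  | _ n ih =>
  by_cases htriv : t.1 = t.2
  · rw [← Prod.mk.eta (p := t), ← htriv]
    exact refl t.1
  by_cases hind : IsIndecomposable T t
  · exact indec t hind
  obtain ⟨M, hKM, hMH, hne₁, hne₂⟩ :
      ∃ M, (t.1, M) ∈ T ∧ (M, t.2) ∈ T ∧ M ≠ t.1 ∧ M ≠ t.2 := by
    simpa [IsIndecomposable, ht, htriv] using hind
  have h₁ : Nat.card t.1 < Nat.card M := hT.card_fst_lt hKM (Ne.symm hne₁)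
  have h₂ : Nat.card M < Nat.card t.2 := hT.card_fst_lt hMH hne₂
  exact decomp _ _ _ hKM hMH (Ne.symm hne₁) hne₂ (ih _ (by dsimp only; omega) hKM rfl)
    (ih _ (by dsimp only; omega) hMH rfl)

lemma IsTransferSystem.subset_of_forall_isIndecomposable_mem [Finite G]
    (hT : IsTransferSystem T) {T' : Set (Subgroup G × Subgroup G)} (hT' : IsTransferSystem T')
    (h : ∀ p, IsIndecomposable T p → p ∈ T') : T ⊆ T' :=
  fun _ hp => hT.induction_on_indecomposable hT'.2.1 h
    (fun K M H _ _ _ _ hKM hMH => hT'.2.2.1 K M H hKM hMH) hp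

namespace IsIndecomposable

lemma isRestrictedConj_left_or_right (hT : IsTransferSystem T) (hp : IsIndecomposable T p)
    {K M H : Subgroup G} (hKM : (K, M) ∈ T) (hMH : (M, H) ∈ T)
    (hpt : IsRestrictedConj p (K, H)) :
    IsRestrictedConj p (K, M) ∨ IsRestrictedConj p (M, H) := by
  obtain ⟨g, L, hL, rfl⟩ := hpt
  have hgKM : g • K ≤ g • M :=
    Subgroup.pointwise_smul_le_pointwise_smul_iff.2 (hT.le_of_mem hKM)
  have h₁ : (g • K ⊓ L, g • M ⊓ L) ∈ T := by
    have := hT.2.2.2.2 _ _ (hT.smul_mem hKM g) (g • M ⊓ L) inf_le_left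
    rwa [← inf_assoc, inf_eq_left.2 hgKM] at this
  have h₂ : (g • M ⊓ L, L) ∈ T := hT.2.2.2.2 _ _ (hT.smul_mem hMH g) L hL
  rcases hp.2.2 _ h₁ h₂ with h | h
  · exact .inr ⟨g, L, hL, by rw [h]⟩
  · exact .inl ⟨g, L, inf_eq_right.1 h, rfl⟩

lemma exists_isRestrictedConj_mem (hT : IsTransferSystem T) (hS : tsGen S = T)
    (hp : IsIndecomposable T p) : ∃ s ∈ S, IsRestrictedConj p s := by
  -- closed under composition by `isRestrictedConj_left_or_right`, hence contains `⟨S⟩ = T`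
  let T' := {q ∈ T | IsRestrictedConj p q → ∃ s ∈ S, IsRestrictedConj p s}
  have hT' : IsTransferSystem T' := by
    refine ⟨fun q hq => hT.le_of_mem hq.1,
      fun H => ⟨hT.2.1 H, fun h => (h.fst_ne_snd hp.2.1 rfl).elim⟩, ?_, ?_, ?_⟩
    · rintro L K H ⟨h₁, h₁'⟩ ⟨h₂, h₂'⟩
      exact ⟨hT.2.2.1 _ _ _ h₁ h₂,
        fun h => (hp.isRestrictedConj_left_or_right hT h₁ h₂ h).elim h₁' h₂'⟩
    · rintro K H ⟨h, h'⟩ g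
      exact ⟨hT.2.2.2.1 _ _ h g,
        fun hg => h' (hg.trans (.smul (ConjAct.toConjAct g) (hT.le_of_mem h)))⟩
    · rintro K H ⟨h, h'⟩ L hL
      exact ⟨hT.2.2.2.2 _ _ h L hL, fun hL' => h' (hL'.trans (.inf_of_le hL))⟩
  have hST' : S ⊆ T' := fun s hs => ⟨hS ▸ subset_tsGen S hs, fun h => ⟨s, hs, h⟩⟩
  have hpT' : p ∈ T' := (hS ▸ tsGen_subset hT' hST') hp.1
  exact hpT'.2 (.refl (hT.le_of_mem hp.1))

lemma exists_isMaxIndecomposable [Finite G] (hT : IsTransferSystem T)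
    (hp : IsIndecomposable T p) : ∃ m, IsMaxIndecomposable T m ∧ IsRestrictedConj p m := by
  obtain ⟨m, ⟨hm, hpm⟩, hmax⟩ := Set.Finite.exists_maximalFor (fun q => Nat.card q.2)
    {q | IsIndecomposable T q ∧ IsRestrictedConj p q} (Set.toFinite _)
    ⟨p, hp, .refl (hT.le_of_mem hp.1)⟩
  exact ⟨m, ⟨hm, fun u hu hmu => hmu.symm_of_card_le (hT.le_of_mem hu.1)
    (hmax ⟨hu, hpm.trans hmu⟩ hmu.card_snd_le)⟩, hpm⟩

end IsIndecomposable

namespace IsMaxIndecomposable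

variable [Finite G]

lemma card_fst_eq (hT : IsTransferSystem T) (hm : IsMaxIndecomposable T m) (ht : t ∈ T)
    (hmt : IsRestrictedConj m t) : Nat.card m.1 = Nat.card t.1 := by
  refine hT.induction_on_indecomposable
    (P := fun t => IsRestrictedConj m t → Nat.card m.1 = Nat.card t.1)
    (fun _ h => (h.fst_ne_snd hm.1.2.1 rfl).elim)
    (fun t ht h => h.card_fst_le.antisymm (hm.2 t ht h).card_fst_le) ?_ ht hmt
  intro K M H hKM hMH hne _ ih₁ ih₂ h
  exact (hm.1.isRestrictedConj_left_or_right hT hKM hMH h).elim ih₁ fun h' =>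
    absurd (ih₂ h') (h.card_fst_le.trans_lt (hT.card_fst_lt hKM hne)).ne

lemma isRestrictedConj_left (hT : IsTransferSystem T) (hm : IsMaxIndecomposable T m)
    {K M H : Subgroup G} (hKM : (K, M) ∈ T) (hMH : (M, H) ∈ T) (hne : K ≠ M)
    (h : IsRestrictedConj m (K, H)) : IsRestrictedConj m (K, M) :=
  (hm.1.isRestrictedConj_left_or_right hT hKM hMH h).resolve_right fun h' =>
    (h.card_fst_le.trans_lt (hT.card_fst_lt hKM hne)).ne (hm.card_fst_eq hT hMH h')

lemma isRestrictedConj_of_common_bound (hT : IsTransferSystem T)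
    (hm : IsMaxIndecomposable T m) {m' : Subgroup G × Subgroup G}
    (hm' : IsMaxIndecomposable T m') (ht : t ∈ T) (hmt : IsRestrictedConj m t)
    (hm't : IsRestrictedConj m' t) : IsRestrictedConj m' m :=
  hT.induction_on_indecomposable
    (P := fun t => IsRestrictedConj m t → IsRestrictedConj m' t → IsRestrictedConj m' m)
    (fun _ h _ => (h.fst_ne_snd hm.1.2.1 rfl).elim)
    (fun t ht h h' => h'.trans (hm.2 t ht h))
    (fun _ _ _ hKM hMH hne _ ih _ h h' => ih (hm.isRestrictedConj_left hT hKM hMH hne h)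
      (hm'.isRestrictedConj_left hT hKM hMH hne h'))
    ht hmt hm't

end IsMaxIndecomposable

namespace IsMinGenSet

variable [Finite G]

lemma exists_isMaxIndecomposable_unique (hT : IsTransferSystem T) (hS : IsMinGenSet S T)
    {s : Subgroup G × Subgroup G} (hs : s ∈ S) :
    ∃ m, IsMaxIndecomposable T m ∧ IsRestrictedConj m s ∧
      ∀ s' ∈ S, IsRestrictedConj m s' → s' = s := by
  obtain ⟨hST, -, hgen, hmin⟩ := hS
  have hT' : IsTransferSystem (tsGen (S \ {s})) :=
    isTransferSystem_tsGen fun p hp => hT.le_of_mem (hST hp.1)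
  obtain ⟨p, hp, hpT'⟩ : ∃ p, IsIndecomposable T p ∧ p ∉ tsGen (S \ {s}) := by
    by_contra! h
    exact (hmin s hs).not_subset (hT.subset_of_forall_isIndecomposable_mem hT' h)
  obtain ⟨m, hm, hpm⟩ := hp.exists_isMaxIndecomposable hT
  have huniq : ∀ s' ∈ S, IsRestrictedConj m s' → s' = s := fun s' hs' hms' =>
    by_contra fun hne => hpT' <|
      hT'.mem_of_isRestrictedConj (subset_tsGen _ ⟨hs', hne⟩) (hpm.trans hms')
  obtain ⟨s₁, hs₁, hms₁⟩ := hm.1.exists_isRestrictedConj_mem hT hgen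
  exact ⟨m, hm, huniq s₁ hs₁ hms₁ ▸ hms₁, huniq⟩

lemma ncard_le (hT : IsTransferSystem T) (hS : IsMinGenSet S T) (hR : tsGen R = T) :
    S.ncard ≤ R.ncard := by
  choose! w hw using fun s (hs : s ∈ S) => hS.exists_isMaxIndecomposable_unique hT hs
  choose! f hfR hf using fun s (hs : s ∈ S) =>
    (hw s hs).1.1.exists_isRestrictedConj_mem hT hR
  refine Set.ncard_le_ncard_of_injOn f hfR (fun s hs s' hs' hss' => ?_) (Set.toFinite R)
  have hw' : IsRestrictedConj (w s') (w s) :=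
    (hw s hs).1.isRestrictedConj_of_common_bound hT (hw s' hs').1
      (hR ▸ subset_tsGen R (hfR s hs)) (hf s hs) (hss' ▸ hf s' hs')
  exact (hw s' hs').2.2 s hs (hw'.trans (hw s hs).2.1)

end IsMinGenSet

end TransferSystems

/-- Any two minimal generating sets of a fixed transfer system have the same cardinality,
and consequently the assignment "size of a minimal basis" is a well-defined map to the
natural numbers. -/
theorem minimal_generating_sets_equicardinal {G : Type*} [Group G] [Finite G] :
    (∀ T S R : Set (Subgroup G × Subgroup G), IsTransferSystem T →
      IsMinGenSet S T → IsMinGenSet R T → S.ncard = R.ncard) ∧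
    ∃ m : Set (Subgroup G × Subgroup G) → ℕ,
      ∀ T S : Set (Subgroup G × Subgroup G), IsTransferSystem T →
        IsMinGenSet S T → m T = S.ncard := by
  have equicard : ∀ T S R : Set (Subgroup G × Subgroup G), IsTransferSystem T →
      IsMinGenSet S T → IsMinGenSet R T → S.ncard = R.ncard := fun T S R hT hS hR =>
    (hS.ncard_le hT hR.2.2.1).antisymm (hR.ncard_le hT hS.2.2.1)
  refine ⟨equicard, fun T => (Classical.epsilon fun S => IsMinGenSet S T).ncard, ?_⟩
  exact fun T S hT hS =>
    equicard T _ S hT (Classical.epsilon_spec (p := fun S => IsMinGenSet S T) ⟨S, hS⟩) hS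
end

section
/- If S and R are two minimal generating sets for the same G-transfer system T, then there is a bijection f : S → R which, for each n, restricts to a bijection between the elements of S whose source subgroup has total prime exponent exactly n and the corresponding elements of R. -/
/-!
Every interval of `tsGen Y` is a chain of moves `A ⟶ B` with `A = gK ⊓ B` and `B ≤ gH` for some
`(K, H) ∈ Y` and `g ∈ G`; since `A ≤ gK`, a chain starting at `A` only uses generators `(K, H)`
with `P(K) ≥ P(A)`.

Let `s ∈ S` with `P(s.1) = N` and let `Φ` be the transfer system generated by the intervals of `T`
whose source has weight `> N`. By the above, `Φ` is generated by `S_{N+1}`, so minimality of `S`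
gives `s ∉ Φ`. Writing `s` as a chain in `R`, the first non-trivial move therefore uses some
`r ∈ R` with `P(r.1) = N`, and it can only end at a subgroup of weight `> N`: so `s` is obtained
from a conjugate of `r` by a restriction followed by an interval of `Φ`. This dependence is
transitive, and between two elements of the same minimal generating set it forces equality
(otherwise `s` would lie in `tsGen (S \ {s})`). Matching generators in both directions thus gives
mutually inverse weight-preserving maps `S → R` and `R → S`.
-/

section ConjSub

variable {G : Type*} [Group G]

theorem conjSub_one (K : Subgroup G) : conjSub 1 K = K := by
  ext x
  simp [conjSub, Subgroup.mem_map]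

theorem conjSub_conjSub (g h : G) (K : Subgroup G) :
    conjSub g (conjSub h K) = conjSub (g * h) K := by
  rw [conjSub, conjSub, Subgroup.map_map]
  congr 1
  ext x
  simp [MulAut.conj_apply, mul_assoc]

theorem conjSub_mono (g : G) {K L : Subgroup G} (h : K ≤ L) : conjSub g K ≤ conjSub g L :=
  Subgroup.map_mono h

theorem conjSub_inf (g : G) (K L : Subgroup G) :
    conjSub g (K ⊓ L) = conjSub g K ⊓ conjSub g L :=
  Subgroup.map_inf K L _ (MulAut.conj g).injective

theorem card_conjSub (g : G) (K : Subgroup G) : Nat.card (conjSub g K) = Nat.card K :=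
  Subgroup.card_map_of_injective (MulAut.conj g).injective

end ConjSub

theorem bigOmega_lt_of_dvd_of_ne {a b : ℕ} (hb : b ≠ 0) (hab : a ∣ b) (hne : a ≠ b) :
    bigOmega a < bigOmega b := by
  obtain ⟨c, rfl⟩ := hab
  have ha : a ≠ 0 := left_ne_zero_of_mul hb
  have hc : c ≠ 0 := right_ne_zero_of_mul hb
  have hc1 : c ≠ 1 := by
    rintro rfl
    exact hne (mul_one a).symm
  have hΩc := ArithmeticFunction.cardFactors_pos_iff_one_lt.mpr
    (Nat.one_lt_iff_ne_zero_and_ne_one.mpr ⟨hc, hc1⟩)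
  simp only [bigOmega, ← ArithmeticFunction.cardFactors_apply,
    ArithmeticFunction.cardFactors_mul ha hc]
  omega

section PrimeWeight

variable {G : Type*} [Group G]

/-- The weight `P(K)` of a subgroup. -/
noncomputable def primeWeight (K : Subgroup G) : ℕ := bigOmega (Nat.card K)

theorem primeWeight_conjSub (g : G) (K : Subgroup G) :
    primeWeight (conjSub g K) = primeWeight K := by
  rw [primeWeight, card_conjSub, primeWeight]

variable [Finite G]

theorem primeWeight_strictMono : StrictMono (primeWeight (G := G)) := fun _ _ h =>
  bigOmega_lt_of_dvd_of_ne Nat.card_pos.ne' (Subgroup.card_dvd_of_le h.le)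
    fun hcard => h.ne (Subgroup.eq_of_le_of_card_ge h.le hcard.ge)

theorem eq_of_le_of_primeWeight_le {A B : Subgroup G} (h : A ≤ B)
    (hw : primeWeight B ≤ primeWeight A) : A = B :=
  h.eq_of_not_lt fun hlt => (primeWeight_strictMono hlt).not_ge hw

end PrimeWeight

section Chains

variable {G : Type*} [Group G] {Y Y' Q : Set (Subgroup G × Subgroup G)} {A B : Subgroup G}

def Move (Y : Set (Subgroup G × Subgroup G)) (A B : Subgroup G) : Prop :=
  ∃ p ∈ Y, ∃ g : G, A = conjSub g p.1 ⊓ B ∧ B ≤ conjSub g p.2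

def chainClosure (Y : Set (Subgroup G × Subgroup G)) : Set (Subgroup G × Subgroup G) :=
  {p | Relation.ReflTransGen (Move Y) p.1 p.2}

theorem Move.le (h : Move Y A B) : A ≤ B := by
  obtain ⟨p, -, g, rfl, -⟩ := h
  exact inf_le_right

theorem Move.mono (hYY' : Y ⊆ Y') (h : Move Y A B) : Move Y' A B := by
  obtain ⟨p, hp, g, h⟩ := h
  exact ⟨p, hYY' hp, g, h⟩

theorem le_of_reflTransGen_move (h : Relation.ReflTransGen (Move Y) A B) : A ≤ B := by
  induction h with
  | refl => exact le_rfl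
  | tail _ hm ih => exact ih.trans hm.le

theorem reflTransGen_move_conjSub (g : G) (h : Relation.ReflTransGen (Move Y) A B) :
    Relation.ReflTransGen (Move Y) (conjSub g A) (conjSub g B) := by
  induction h with
  | refl => exact .refl
  | tail _ hm ih =>
    obtain ⟨p, hp, k, rfl, hle⟩ := hm
    refine ih.tail ⟨p, hp, g * k, ?_, ?_⟩
    · rw [conjSub_inf, conjSub_conjSub]
    · exact (conjSub_mono g hle).trans_eq (conjSub_conjSub g k p.2)

theorem reflTransGen_move_inf (h : Relation.ReflTransGen (Move Y) A B) {L : Subgroup G}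
    (hL : L ≤ B) : Relation.ReflTransGen (Move Y) (A ⊓ L) L := by
  induction h generalizing L with
  | refl => rw [inf_eq_right.mpr hL]
  | @tail C D hAC hm ih =>
    obtain ⟨p, hp, g, hC, hle⟩ := hm
    have hmove : Move Y (C ⊓ L) L := by
      refine ⟨p, hp, g, ?_, hL.trans hle⟩
      rw [hC, inf_assoc, inf_eq_right.mpr hL]
    have hAL : A ⊓ (C ⊓ L) = A ⊓ L := by
      rw [← inf_assoc, inf_eq_left.mpr (le_of_reflTransGen_move hAC)]
    exact hAL ▸ (ih inf_le_left).tail hmove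

theorem isTransferSystem_chainClosure (Y : Set (Subgroup G × Subgroup G)) :
    IsTransferSystem (chainClosure Y) :=
  ⟨fun _ h => le_of_reflTransGen_move h, fun _ => .refl, fun _ _ _ => .trans,
    fun _ _ h g => reflTransGen_move_conjSub g h, fun _ _ h _ hL => reflTransGen_move_inf h hL⟩

theorem subset_chainClosure (hY : ∀ p ∈ Y, p.1 ≤ p.2) : Y ⊆ chainClosure Y := fun p hp =>
  .single ⟨p, hp, 1, by rw [conjSub_one, inf_eq_left.mpr (hY p hp)], by rw [conjSub_one]⟩

theorem chainClosure_mono (hYY' : Y ⊆ Y') : chainClosure Y ⊆ chainClosure Y' := fun _ hp =>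
  Relation.ReflTransGen.mono (fun _ _ => Move.mono hYY') _ _ hp

theorem chainClosure_subset (hQ : IsTransferSystem Q) (hYQ : Y ⊆ Q) : chainClosure Y ⊆ Q := by
  rintro ⟨A, B⟩ (h : Relation.ReflTransGen (Move Y) A B)
  induction h with
  | refl => exact hQ.2.1 A
  | tail _ hm ih =>
    obtain ⟨p, hp, g, rfl, hle⟩ := hm
    exact hQ.2.2.1 _ _ _ ih (hQ.2.2.2.2 _ _ (hQ.2.2.2.1 _ _ (hYQ hp) g) _ hle)

theorem tsGen_eq_chainClosure (hY : ∀ p ∈ Y, p.1 ≤ p.2) : tsGen Y = chainClosure Y :=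
  subset_antisymm
    (Set.sInter_subset_of_mem ⟨isTransferSystem_chainClosure Y, subset_chainClosure hY⟩)
    fun _ hp => Set.mem_sInter.mpr fun _ hQ => chainClosure_subset hQ.1 hQ.2 hp

end Chains

section Filtration

variable {G : Type*} [Group G] {T Y : Set (Subgroup G × Subgroup G)} {N : ℕ}

/-- The set `Y_N`. -/
def weightGe (Y : Set (Subgroup G × Subgroup G)) (N : ℕ) : Set (Subgroup G × Subgroup G) :=
  {p ∈ Y | N ≤ primeWeight p.1}

/-- The transfer system `Φ = ⟨T_{N+1}⟩` (see `tsGen_eq_chainClosure`). -/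
def closureAbove (T : Set (Subgroup G × Subgroup G)) (N : ℕ) : Set (Subgroup G × Subgroup G) :=
  chainClosure (weightGe T (N + 1))

def Depends (T : Set (Subgroup G × Subgroup G)) (N : ℕ) (v z : Subgroup G × Subgroup G) :
    Prop :=
  ∃ g C, v.1 = conjSub g z.1 ∧ v.1 ≤ C ∧ C ≤ conjSub g z.2 ∧ (C, v.2) ∈ closureAbove T N

theorem Depends.trans {v z z' : Subgroup G × Subgroup G} (h : Depends T N v z)
    (h' : Depends T N z z') : Depends T N v z' := by
  obtain ⟨g, C, hv, hvC, hC, hCv⟩ := h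
  obtain ⟨g', C', hz, hzC', hC', hC'z⟩ := h'
  have hTS := isTransferSystem_chainClosure (weightGe T (N + 1))
  refine ⟨g * g', conjSub g C' ⊓ C, ?_, le_inf ?_ hvC, ?_, ?_⟩
  · rw [hv, hz, conjSub_conjSub]
  · exact hv ▸ conjSub_mono g hzC'
  · exact inf_le_left.trans ((conjSub_mono g hC').trans_eq (conjSub_conjSub g g' z'.2))
  · have hconj : (conjSub g C', conjSub g z.2) ∈ closureAbove T N := hTS.2.2.2.1 _ _ hC'z g
    exact hTS.2.2.1 _ _ _ (hTS.2.2.2.2 _ _ hconj C hC) hCv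

theorem mem_of_depends {Q : Set (Subgroup G × Subgroup G)} (hQ : IsTransferSystem Q)
    (hNQ : closureAbove T N ⊆ Q) {v z : Subgroup G × Subgroup G} (hz : z ∈ Q)
    (h : Depends T N v z) : v ∈ Q := by
  obtain ⟨g, C, hv, hvC, hC, hCv⟩ := h
  have hres : (conjSub g z.1 ⊓ C, C) ∈ Q := hQ.2.2.2.2 _ _ (hQ.2.2.2.1 _ _ hz g) C hC
  rw [← hv, inf_eq_left.mpr hvC] at hres
  exact hQ.2.2.1 _ _ _ hres (hNQ hCv)

variable [Finite G]

theorem reflTransGen_move_weightGe {A B : Subgroup G}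
    (h : Relation.ReflTransGen (Move Y) A B) (hA : N ≤ primeWeight A) :
    Relation.ReflTransGen (Move (weightGe Y N)) A B := by
  induction h using Relation.ReflTransGen.head_induction_on with
  | refl => exact .refl
  | @head A C hm _ ih =>
    have hC : N ≤ primeWeight C := hA.trans (primeWeight_strictMono.monotone hm.le)
    obtain ⟨p, hp, g, hA', hle⟩ := hm
    have hp1 : primeWeight A ≤ primeWeight p.1 :=
      primeWeight_conjSub g p.1 ▸ primeWeight_strictMono.monotone (hA' ▸ inf_le_left)
    exact (ih hC).head ⟨p, ⟨hp, hA.trans hp1⟩, g, hA', hle⟩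

theorem weightGe_chainClosure_subset (Y : Set (Subgroup G × Subgroup G)) (N : ℕ) :
    weightGe (chainClosure Y) N ⊆ chainClosure (weightGe Y N) := fun _ hp =>
  reflTransGen_move_weightGe hp.1 hp.2

theorem mem_closureAbove_of_reflTransGen (hYT : Y ⊆ T) {C B : Subgroup G}
    (h : Relation.ReflTransGen (Move Y) C B) (hC : N < primeWeight C) :
    (C, B) ∈ closureAbove T N :=
  chainClosure_mono (Y' := weightGe T (N + 1)) (fun _ hp => ⟨hYT hp.1, hp.2⟩)
    (reflTransGen_move_weightGe h hC)

theorem mem_closureAbove_or_depends (hYT : Y ⊆ T) {A B : Subgroup G}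
    (h : Relation.ReflTransGen (Move Y) A B) (hAB : A ≠ B) :
    (A, B) ∈ closureAbove T (primeWeight A) ∨
      ∃ p ∈ Y, primeWeight p.1 = primeWeight A ∧ Depends T (primeWeight A) (A, B) p := by
  induction h using Relation.ReflTransGen.head_induction_on with
  | refl => exact absurd rfl hAB
  | @head A C hm hCB ih =>
    rcases eq_or_ne A C with rfl | hAC
    · exact ih hAB
    have hlt : A < C := lt_of_le_of_ne hm.le hAC
    have hCB' := mem_closureAbove_of_reflTransGen hYT hCB (primeWeight_strictMono hlt)
    obtain ⟨p, hp, g, hA, hle⟩ := hm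
    have hAp : A ≤ conjSub g p.1 := hA ▸ inf_le_left
    rcases (primeWeight_conjSub g p.1 ▸ primeWeight_strictMono.monotone hAp).lt_or_eq
      with hp1 | hp1
    · have hmove : Move (weightGe T (primeWeight A + 1)) A C := ⟨p, ⟨hYT hp, hp1⟩, g, hA, hle⟩
      exact .inl (hCB'.head hmove)
    · have hAeq : A = conjSub g p.1 :=
        eq_of_le_of_primeWeight_le hAp (by rw [primeWeight_conjSub, hp1])
      exact .inr ⟨p, hp, hp1.symm, g, C, hAeq, hlt.le, hle, hCB'⟩

end Filtration

namespace IsMinGenSet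

variable {G : Type*} [Group G] {T S R : Set (Subgroup G × Subgroup G)}
  {s : Subgroup G × Subgroup G}

theorem chainClosure_eq (hT : IsTransferSystem T) (hS : IsMinGenSet S T) :
    chainClosure S = T := by
  rw [← tsGen_eq_chainClosure fun p hp => hT.1 p (hS.1 hp), hS.2.2.1]

theorem notMem_chainClosure_diff (hT : IsTransferSystem T) (hS : IsMinGenSet S T)
    (hs : s ∈ S) : s ∉ chainClosure (S \ {s}) := by
  intro hmem
  have hle : ∀ p ∈ S \ {s}, p.1 ≤ p.2 := fun p hp => hT.1 p (hS.1 hp.1)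
  have hS_sub : S ⊆ chainClosure (S \ {s}) := fun p hp =>
    (eq_or_ne p s).elim (· ▸ hmem) fun hps => subset_chainClosure hle ⟨hp, hps⟩
  have hT_sub : T ⊆ tsGen (S \ {s}) := by
    rw [← hS.2.2.1, tsGen_eq_chainClosure hle]
    exact Set.sInter_subset_of_mem ⟨isTransferSystem_chainClosure _, hS_sub⟩
  exact (hS.2.2.2 s hs).not_subset hT_sub

variable [Finite G]

theorem closureAbove_subset_chainClosure_diff (hT : IsTransferSystem T)
    (hS : IsMinGenSet S T) : closureAbove T (primeWeight s.1) ⊆ chainClosure (S \ {s}) := by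
  refine chainClosure_subset (isTransferSystem_chainClosure _) fun t ht => ?_
  have hslice : weightGe S (primeWeight s.1 + 1) ⊆ S \ {s} := fun p hp =>
    ⟨hp.1, fun hps => by rw [Set.mem_singleton_iff.mp hps] at hp; exact hp.2.not_gt (by omega)⟩
  refine chainClosure_mono hslice (weightGe_chainClosure_subset S _ ⟨?_, ht.2⟩)
  rw [hS.chainClosure_eq hT]
  exact ht.1

theorem eq_of_depends (hT : IsTransferSystem T) (hS : IsMinGenSet S T)
    {s' : Subgroup G × Subgroup G} (hs : s ∈ S) (hs' : s' ∈ S)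
    (h : Depends T (primeWeight s.1) s s') : s = s' := by
  by_contra hne
  have hs'_mem : s' ∈ chainClosure (S \ {s}) :=
    subset_chainClosure (fun p hp => hT.1 p (hS.1 hp.1)) ⟨hs', Ne.symm hne⟩
  exact hS.notMem_chainClosure_diff hT hs <| mem_of_depends (isTransferSystem_chainClosure _)
    (hS.closureAbove_subset_chainClosure_diff hT) hs'_mem h

theorem exists_depends (hT : IsTransferSystem T) (hS : IsMinGenSet S T)
    (hR : IsMinGenSet R T) (hs : s ∈ S) :
    ∃ r ∈ R, primeWeight r.1 = primeWeight s.1 ∧ Depends T (primeWeight s.1) s r := by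
  have hchain : s ∈ chainClosure R := hR.chainClosure_eq hT ▸ hS.1 hs
  refine (mem_closureAbove_or_depends hR.1 hchain (hS.2.1 s hs)).resolve_left fun hmem => ?_
  exact hS.notMem_chainClosure_diff hT hs (hS.closureAbove_subset_chainClosure_diff hT hmem)

theorem exists_matching (hT : IsTransferSystem T) (hS : IsMinGenSet S T)
    (hR : IsMinGenSet R T) :
    ∃ f : S → R, ∀ a, primeWeight (f a).1.1 = primeWeight a.1.1 ∧
      Depends T (primeWeight a.1.1) a (f a) := by
  choose f hfR hf using fun a : S => hS.exists_depends hT hR a.2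
  exact ⟨fun a => ⟨f a, hfR a⟩, hf⟩

theorem leftInverse_of_matching (hT : IsTransferSystem T) (hS : IsMinGenSet S T)
    {f : S → R} {g : R → S}
    (hf : ∀ a, primeWeight (f a).1.1 = primeWeight a.1.1 ∧ Depends T (primeWeight a.1.1) a (f a))
    (hg : ∀ b, primeWeight (g b).1.1 = primeWeight b.1.1 ∧ Depends T (primeWeight b.1.1) b (g b)) :
    Function.LeftInverse g f := fun a => by
  have hgf := (hg (f a)).2
  rw [(hf a).1] at hgf
  exact Subtype.ext (hS.eq_of_depends hT a.2 (g (f a)).2 ((hf a).2.trans hgf)).symm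

end IsMinGenSet

/-- Between two minimal generating sets of the same transfer system there is a bijection
preserving the total prime exponent of the source subgroup. -/
theorem minimal_generating_sets_filtered_bijection {G : Type*} [Group G] [Finite G]
    (T S R : Set (Subgroup G × Subgroup G)) (hT : IsTransferSystem T)
    (hS : IsMinGenSet S T) (hR : IsMinGenSet R T) :
    ∃ f : S → R, Function.Bijective f ∧
      ∀ a : S, bigOmega (Nat.card (↥((f a).1.1))) = bigOmega (Nat.card (↥(a.1.1))) := by
  obtain ⟨f, hf⟩ := hS.exists_matching hT hR
  obtain ⟨g, hg⟩ := hR.exists_matching hT hS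
  exact ⟨f, ⟨(hS.leftInverse_of_matching hT hf hg).injective,
    (hR.leftInverse_of_matching hT hg hf).surjective⟩, fun a => (hf a).1⟩
end

section
/- For the cyclic group G = C_{p_1⋯p_n} with distinct primes p_i, the width of G equals n. -/
/-! ### Auxiliary material -/

section Aux

lemma conjSub_eq {G : Type*} [CommGroup G] (g : G) (H : Subgroup G) : conjSub g H = H := by
  ext x
  simp only [conjSub, Subgroup.mem_map, MulEquiv.coe_toMonoidHom, MulAut.conj_apply]
  constructor
  · rintro ⟨y, hy, rfl⟩
    rwa [mul_comm, inv_mul_cancel_left]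
  · intro hx
    exact ⟨x, hx, by rw [mul_comm, inv_mul_cancel_left]⟩

lemma isTS_complete {G : Type*} [CommGroup G] :
    IsTransferSystem {p : Subgroup G × Subgroup G | p.1 ≤ p.2} := by
  refine ⟨fun p hp => hp, fun H => (le_refl H : H ≤ H), fun L K H h1 h2 => (le_trans h1 h2 : L ≤ H),
    fun K H h g => ?_, fun K H h L hL => (inf_le_right : K ⊓ L ≤ L)⟩
  rw [conjSub_eq, conjSub_eq]; exact h

lemma tsGen_mono {G : Type*} [Group G] {S₁ S₂ : Set (Subgroup G × Subgroup G)}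
    (h : S₁ ⊆ S₂) : tsGen S₁ ⊆ tsGen S₂ := by
  intro x hx
  exact Set.mem_sInter.mpr fun T hT => Set.mem_sInter.mp hx T ⟨hT.1, h.trans hT.2⟩

abbrev GN (N : ℕ) := Multiplicative (ZMod N)

/-- The `N/p`-torsion subgroup, which for `p ∣ N` is the subgroup of index `p`. -/
def Mp (N p : ℕ) : Subgroup (GN N) := MonoidHom.ker (powMonoidHom (N / p))

lemma mem_Mp {N p : ℕ} {x : GN N} : x ∈ Mp N p ↔ x ^ (N / p) = 1 := Iff.rfl

lemma cardGN (N : ℕ) [NeZero N] : Nat.card (GN N) = N := by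
  simp only [Nat.card_eq_fintype_card, Fintype.card_multiplicative, ZMod.card]

lemma Mp_eq_zpowers (N p : ℕ) [NeZero N] (hp : p.Prime) (hpN : p ∣ N) :
    Mp N p = Subgroup.zpowers (Multiplicative.ofAdd ((p : ZMod N))) := by
  ext x
  constructor
  · intro hx
    have hx' : ((N / p : ℕ) : ZMod N) * (x.toAdd) = 0 := by
      have := hx
      rw [mem_Mp] at this
      have h2 : Multiplicative.toAdd (x ^ (N / p)) = Multiplicative.toAdd (1 : GN N) := by rw [this]
      simpa [toAdd_pow, nsmul_eq_mul] using h2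
    set v := (Multiplicative.toAdd x).val with hv
    have hdvd : N ∣ (N / p) * v := by
      rw [← ZMod.natCast_eq_zero_iff]
      push_cast
      rw [ZMod.natCast_zmod_val]
      exact hx'
    have hpv : p ∣ v := by
      have h3 : (N / p) * p ∣ (N / p) * v := by
        rwa [Nat.div_mul_cancel hpN]
      exact (Nat.mul_dvd_mul_iff_left
        (Nat.div_pos (Nat.le_of_dvd (Nat.pos_of_ne_zero (NeZero.ne N)) hpN) hp.pos)).mp h3
    refine ⟨((v / p : ℕ) : ℤ), ?_⟩
    show Multiplicative.ofAdd ((p : ZMod N)) ^ ((v / p : ℕ) : ℤ) = x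
    rw [zpow_natCast, ← ofAdd_nsmul]
    have : (v / p) • ((p : ZMod N)) = ((v / p * p : ℕ) : ZMod N) := by push_cast; ring
    rw [this, Nat.div_mul_cancel hpv, hv, ZMod.natCast_zmod_val]
    rfl
  · rintro ⟨k, rfl⟩
    rw [mem_Mp, ← zpow_natCast, ← zpow_mul, mul_comm, zpow_mul, zpow_natCast, ← ofAdd_nsmul]
    have : (N / p) • ((p : ZMod N)) = ((N / p * p : ℕ) : ZMod N) := by push_cast; ring
    rw [this, Nat.div_mul_cancel hpN, ZMod.natCast_self]
    simp

lemma card_Mp (N p : ℕ) [NeZero N] (hp : p.Prime) (hpN : p ∣ N) :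
    Nat.card (Mp N p) = N / p := by
  rw [Mp_eq_zpowers N p hp hpN, Nat.card_zpowers, orderOf_ofAdd_eq_addOrderOf,
    ZMod.addOrderOf_coe p (NeZero.ne N), Nat.gcd_eq_right hpN]

variable {N : ℕ} [NeZero N]

lemma card_sub_dvd (H : Subgroup (GN N)) : Nat.card H ∣ N := by
  simpa [cardGN] using Subgroup.card_subgroup_dvd_card H

lemma le_Mp {p : ℕ} (hp : p.Prime) (hpN : p ∣ N) {K : Subgroup (GN N)}
    (h : ¬ p ∣ Nat.card K) : K ≤ Mp N p := by
  have hdvd : Nat.card K ∣ N / p := by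
    have h1 : Nat.card K ∣ (N / p) * p := by rw [Nat.div_mul_cancel hpN]; exact card_sub_dvd K
    exact Nat.Coprime.dvd_of_dvd_mul_right ((hp.coprime_iff_not_dvd.mpr h).symm) h1
  intro x hx
  rw [mem_Mp]
  obtain ⟨t, ht⟩ := hdvd
  have h2 : (⟨x, hx⟩ : K) ^ Nat.card K = 1 := pow_card_eq_one'
  have h3 : x ^ Nat.card K = 1 := by
    have h4 := congrArg (Subgroup.subtype K) h2
    rw [map_pow, map_one] at h4
    simpa using h4
  rw [ht, pow_mul, h3, one_pow]

omit [NeZero N] in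
lemma not_dvd_Ndiv {p : ℕ} (hN : Squarefree N) (hp : p.Prime) (hpN : p ∣ N) : ¬ p ∣ N / p := by
  intro h
  have : p * p ∣ N := by
    obtain ⟨c, hc⟩ := h
    exact ⟨c, by rw [← Nat.div_mul_cancel hpN, hc]; ring⟩
  exact hp.not_isUnit (hN p this)

lemma H_not_le_Mp {p : ℕ} (hN : Squarefree N) (hp : p.Prime) (hpN : p ∣ N)
    {H : Subgroup (GN N)} (hpH : p ∣ Nat.card H) : ¬ H ≤ Mp N p := by
  intro hle
  haveI : Fact p.Prime := ⟨hp⟩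
  obtain ⟨g, hg⟩ := exists_prime_orderOf_dvd_card' (G := H) p hpH
  have h1 : ((g : GN N)) ^ (N / p) = 1 := (mem_Mp).mp (hle g.2)
  have h2 : orderOf (g : GN N) = p := by rw [Subgroup.orderOf_coe, hg]
  have h3 : orderOf (g : GN N) ∣ N / p := orderOf_dvd_of_pow_eq_one h1
  rw [h2] at h3
  exact not_dvd_Ndiv hN hp hpN h3

lemma gen_aux (hN : Squarefree N) {T : Set (Subgroup (GN N) × Subgroup (GN N))}
    (hT : IsTransferSystem T)
    (hS0 : ∀ p : ℕ, p.Prime → p ∣ N → (Mp N p, ⊤) ∈ T) :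
    ∀ (n : ℕ) (K H : Subgroup (GN N)), Nat.card H ≤ n → K ≤ H → (K, H) ∈ T := by
  intro n
  induction n with
  | zero => intro K H hcard _; exact absurd hcard (by simpa using Nat.card_pos.ne')
  | succ n ih =>
    intro K H hcard hKH
    by_cases hKe : K = H
    · subst hKe; exact hT.2.1 K
    have hdvd : Nat.card K ∣ Nat.card H := Subgroup.card_dvd_of_le hKH
    obtain ⟨m, hm⟩ := hdvd
    have hm1 : m ≠ 1 := by
      intro h; rw [h, mul_one] at hm
      exact hKe (Subgroup.eq_of_le_of_card_ge hKH (le_of_eq hm))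
    obtain ⟨p, hp, hpm⟩ := Nat.exists_prime_and_dvd hm1
    have hHsq : Squarefree (Nat.card H) := hN.squarefree_of_dvd (card_sub_dvd H)
    have hpH : p ∣ Nat.card H := hm ▸ Dvd.dvd.mul_left hpm _
    have hpN : p ∣ N := hpH.trans (card_sub_dvd H)
    have hpK : ¬ p ∣ Nat.card K := by
      intro h
      have : p * p ∣ Nat.card H := by
        obtain ⟨a, ha⟩ := h; obtain ⟨b, hb⟩ := hpm
        exact ⟨a * b, by rw [hm, ha, hb]; ring⟩
      exact hp.not_isUnit (hHsq p this)
    set H' := Mp N p ⊓ H with hH'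
    have hKH' : K ≤ H' := le_inf (le_Mp hp hpN hpK) hKH
    have hH'H : H' ≤ H := inf_le_right
    have hH'ne : H' ≠ H := by
      intro h
      exact H_not_le_Mp hN hp hpN hpH (h ▸ (inf_le_left : H' ≤ Mp N p))
    have hcard' : Nat.card H' < Nat.card H :=
      lt_of_le_of_ne (Nat.le_of_dvd Nat.card_pos (Subgroup.card_dvd_of_le hH'H))
        (fun h => hH'ne (Subgroup.eq_of_le_of_card_ge hH'H (le_of_eq h.symm)))
    have h1 : (H', H) ∈ T := hT.2.2.2.2 (Mp N p) ⊤ (hS0 p hp hpN) H le_top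
    have h2 : (K, H') ∈ T := ih K H' (by omega) hKH'
    exact hT.2.2.1 K H' H h2 h1

lemma Mp_max (hN : Squarefree N) {p : ℕ} (hp : p.Prime) (hpN : p ∣ N)
    {K : Subgroup (GN N)} (h : Mp N p ≤ K) : K = Mp N p ∨ K = ⊤ := by
  have hMc : Nat.card (Mp N p) = N / p := card_Mp N p hp hpN
  have h1 : Nat.card (Mp N p) ∣ Nat.card K := Subgroup.card_dvd_of_le h
  obtain ⟨t, ht⟩ := h1
  have h2 : Nat.card K ∣ N := card_sub_dvd K
  have hNp : 0 < N / p :=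
    Nat.div_pos (Nat.le_of_dvd (Nat.pos_of_ne_zero (NeZero.ne N)) hpN) hp.pos
  have htp : t ∣ p := by
    have h3 : (N / p) * t ∣ (N / p) * p := by
      rw [Nat.div_mul_cancel hpN, ← hMc, ← ht]; exact h2
    exact (Nat.mul_dvd_mul_iff_left hNp).mp h3
  rcases (Nat.Prime.eq_one_or_self_of_dvd hp t htp) with h4 | h4
  · left
    refine (Subgroup.eq_of_le_of_card_ge h ?_).symm
    rw [ht, h4, mul_one]
  · right
    apply Subgroup.eq_top_of_card_eq
    rw [cardGN, ht, h4, hMc, Nat.div_mul_cancel hpN]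

lemma Mp_ne_top {p : ℕ} (hp : p.Prime) (hpN : p ∣ N) : Mp N p ≠ ⊤ := by
  intro h
  have h1 : Nat.card (Mp N p) = N / p := card_Mp N p hp hpN
  rw [h, Subgroup.card_top, cardGN] at h1
  have : N / p < N := Nat.div_lt_self (Nat.pos_of_ne_zero (NeZero.ne N)) hp.one_lt
  omega

end Aux

/-- For the cyclic group of squarefree order `N = p_1 ⋯ p_n` (`n` distinct primes), the
width — the size of any minimal generating set of the complete transfer system — equals
`n`, the number of prime factors of `N`. -/
theorem width_squarefree_cyclic (N : ℕ) (hN : Squarefree N)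
    (S : Set (Subgroup (Multiplicative (ZMod N)) × Subgroup (Multiplicative (ZMod N))))
    (hS : IsMinGenSet S {p | p.1 ≤ p.2}) :
    S.ncard = N.primeFactors.card := by
  haveI : NeZero N := ⟨hN.ne_zero⟩
  obtain ⟨hsub, hne, hgen, hmin⟩ := hS
  have hTts : IsTransferSystem {p : Subgroup (GN N) × Subgroup (GN N) | p.1 ≤ p.2} :=
    isTS_complete
  -- every coatom pair is forced to lie in `S`
  have hforced : ∀ p : ℕ, p.Prime → p ∣ N → (Mp N p, ⊤) ∈ S := by
    intro p hp hpN
    by_contra hns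
    set T' : Set (Subgroup (GN N) × Subgroup (GN N)) :=
      {q | q.1 ≤ q.2 ∧ q ≠ (Mp N p, ⊤)} with hT'def
    have hT' : IsTransferSystem T' := by
      refine ⟨fun q hq => hq.1, fun H => ⟨le_refl H, ?_⟩, ?_, ?_, ?_⟩
      · intro h
        rw [Prod.mk.injEq] at h
        exact Mp_ne_top hp hpN (by rw [← h.1, h.2])
      · intro L K H h1 h2
        refine ⟨h1.1.trans h2.1, ?_⟩
        intro h
        rw [Prod.mk.injEq] at h
        have hMK : Mp N p ≤ K := h.1 ▸ h1.1
        rcases Mp_max hN hp hpN hMK with hK | hK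
        · exact h2.2 (by rw [Prod.mk.injEq]; exact ⟨hK, h.2⟩)
        · exact h1.2 (by rw [Prod.mk.injEq]; exact ⟨h.1, hK⟩)
      · intro K H h g
        rw [conjSub_eq, conjSub_eq]
        exact h
      · intro K H h L hLH
        refine ⟨inf_le_right, ?_⟩
        intro he
        rw [Prod.mk.injEq] at he
        have hL : L = ⊤ := he.2
        have hH : H = ⊤ := top_le_iff.mp (hL ▸ hLH)
        have hK : K = Mp N p := by rw [← he.1, hL, inf_top_eq]
        exact h.2 (by rw [Prod.mk.injEq]; exact ⟨hK, hH⟩)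
    have hmem : (Mp N p, (⊤ : Subgroup (GN N))) ∈ tsGen S := by
      rw [hgen]
      exact (le_top : Mp N p ≤ ⊤)
    have hsubT' : tsGen S ⊆ T' :=
      Set.sInter_subset_of_mem ⟨hT', fun q hq => ⟨hsub hq, fun h => hns (h ▸ hq)⟩⟩
    exact (hsubT' hmem).2 rfl
  set S₀ : Set (Subgroup (GN N) × Subgroup (GN N)) :=
    (fun p => (Mp N p, (⊤ : Subgroup (GN N)))) '' (N.primeFactors : Set ℕ) with hS₀def
  have hS₀S : S₀ ⊆ S := by
    rintro q ⟨p, hp, rfl⟩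
    exact hforced p (Nat.prime_of_mem_primeFactors hp) (Nat.dvd_of_mem_primeFactors hp)
  have hTgen : {p : Subgroup (GN N) × Subgroup (GN N) | p.1 ≤ p.2} ⊆ tsGen S₀ := by
    intro q hq
    refine Set.mem_sInter.mpr fun T' hT' => ?_
    have := gen_aux hN hT'.1
      (fun p hp hpN => hT'.2 ⟨p, by
        simp only [Finset.coe_sort_coe, Finset.mem_coe, Nat.mem_primeFactors]
        exact ⟨hp, hpN, NeZero.ne N⟩, rfl⟩)
      (Nat.card q.2) q.1 q.2 le_rfl hq
    simpa using this
  have hSS₀ : S ⊆ S₀ := by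
    intro s hs
    by_contra hns
    have h1 : S₀ ⊆ S \ {s} := by
      intro q hq
      refine ⟨hS₀S hq, ?_⟩
      simp only [Set.mem_singleton_iff]
      rintro rfl
      exact hns hq
    have h2 : {p : Subgroup (GN N) × Subgroup (GN N) | p.1 ≤ p.2} ⊆ tsGen (S \ {s}) :=
      hTgen.trans (tsGen_mono h1)
    exact (hmin s hs).2 h2
  have hSeq : S = S₀ := Set.Subset.antisymm hSS₀ hS₀S
  rw [hSeq, hS₀def]
  rw [Set.ncard_image_of_injOn, Set.ncard_coe_finset]
  intro p₁ h₁ p₂ h₂ h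
  simp only [Finset.mem_coe] at h₁ h₂
  rw [Prod.mk.injEq] at h
  have hc : N / p₁ = N / p₂ := by
    rw [← card_Mp N p₁ (Nat.prime_of_mem_primeFactors h₁) (Nat.dvd_of_mem_primeFactors h₁),
      ← card_Mp N p₂ (Nat.prime_of_mem_primeFactors h₂) (Nat.dvd_of_mem_primeFactors h₂), h.1]
  have e1 : N / (N / p₁) = p₁ := Nat.div_div_self (Nat.dvd_of_mem_primeFactors h₁) (NeZero.ne N)
  have e2 : N / (N / p₂) = p₂ := Nat.div_div_self (Nat.dvd_of_mem_primeFactors h₂) (NeZero.ne N)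
  rw [← e1, ← e2, hc]
end

section
/- For all odd n ≥ 3 and all even n ≥ 8, one has ∑_{i=0}^{⌊(n-1)/2⌋} n!/((i+1)!·(n-2i-1)!·i!) < ∑_{i=0}^{⌊(n-1)/2⌋} n!/(i!·(n-2i)!·i!). -/
/-- The trinomial coefficient `n! / (a! b! c!)` (meant for `a + b + c = n`). -/
def trinom (n a b c : ℕ) : ℕ :=
  n.factorial / (a.factorial * b.factorial * c.factorial)

section Aux

open Polynomial Finset

/-- `TT n k` is the coefficient of `x^k` in `(1 + x + x^2)^n`. -/
noncomputable def TT (n k : ℕ) : ℕ := (((1 + X + X ^ 2 : ℕ[X])) ^ n).coeff k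

lemma TT_rec (n k : ℕ) : TT (n+1) (k+2) = TT n (k+2) + TT n (k+1) + TT n k := by
  have h : ((1 + X + X ^ 2 : ℕ[X])) ^ (n+1)
      = (1 + X + X ^ 2) ^ n + X * (1 + X + X^2)^n + X^2 * (1 + X + X^2)^n := by ring
  simp [TT, h, coeff_add, coeff_X_mul]

lemma TT_rec1 (n : ℕ) : TT (n+1) 1 = TT n 1 + TT n 0 := by
  have h : ((1 + X + X ^ 2 : ℕ[X])) ^ (n+1)
      = (1 + X + X ^ 2) ^ n + X * (1 + X + X^2)^n + X^2 * (1 + X + X^2)^n := by ring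
  have h2 : ((X^2 : ℕ[X]) * (1 + X + X^2)^n).coeff 1 = 0 := by
    rw [coeff_X_pow_mul']; simp
  simp [TT, h, coeff_add, h2]

lemma TT_rec0 (n : ℕ) : TT (n+1) 0 = TT n 0 := by
  have h : ((1 + X + X ^ 2 : ℕ[X])) ^ (n+1)
      = (1 + X + X ^ 2) ^ n + X * (1 + X + X^2)^n + X^2 * (1 + X + X^2)^n := by ring
  have h1 : ((X : ℕ[X]) * (1 + X + X^2)^n).coeff 0 = 0 := by
    rw [show (X : ℕ[X]) = X^1 by ring, coeff_X_pow_mul']; simp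
  have h2 : ((X^2 : ℕ[X]) * (1 + X + X^2)^n).coeff 0 = 0 := by
    rw [coeff_X_pow_mul']; simp
  simp [TT, h, coeff_add, h1, h2]

lemma TT_zero (n : ℕ) : TT n 0 = 1 := by
  induction n with
  | zero => simp [TT]
  | succ m ih => rw [TT_rec0, ih]

lemma reflect_p : (1 + X + X ^ 2 : ℕ[X]).reflect 2 = 1 + X + X ^ 2 := by
  rw [reflect_add, reflect_add, reflect_one, reflect_monomial]
  conv_lhs => rw [show (X : ℕ[X]) = X^1 by ring, reflect_monomial]
  have h1 : (revAt 2) 1 = 1 := by decide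
  have h2 : (revAt 2) 2 = 0 := by decide
  rw [h1, h2]; ring

lemma reflect_pow (n : ℕ) :
    ((1 + X + X ^ 2 : ℕ[X]) ^ n).reflect (2 * n) = (1 + X + X ^ 2) ^ n := by
  induction n with
  | zero => simp [reflect_one 0]
  | succ m ih =>
      have hd : (1 + X + X ^ 2 : ℕ[X]).natDegree ≤ 2 := by compute_degree
      have hdp : ((1 + X + X ^ 2 : ℕ[X]) ^ m).natDegree ≤ 2 * m :=
        le_trans natDegree_pow_le (by nlinarith)
      have h1 : ((1 + X + X ^ 2 : ℕ[X]) ^ (m+1)).reflect (2 * (m+1))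
          = ((1 + X + X ^ 2 : ℕ[X]) * (1 + X + X^2) ^ m).reflect (2 + 2 * m) := by
        ring_nf
      rw [h1, reflect_mul _ _ hd hdp, reflect_p, ih]; ring

lemma TT_symm {n k : ℕ} (h : k ≤ 2 * n) : TT n k = TT n (2 * n - k) := by
  conv_lhs => rw [TT, ← reflect_pow n, coeff_reflect, revAt_le h]
  rfl

lemma TT_formula (n k : ℕ) :
    TT n k = ∑ i ∈ range (n + 1),
      if 2 * i ≤ k then n.choose i * (n - i).choose (k - 2 * i) else 0 := by
  have hsplit : (1 + X + X ^ 2 : ℕ[X]) = X ^ 2 + (1 + X) := by ring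
  rw [TT, hsplit, add_pow, finset_sum_coeff]
  refine Finset.sum_congr rfl fun i hi => ?_
  rw [show ((X:ℕ[X]) ^ 2) ^ i = X ^ (2 * i) by rw [← pow_mul, mul_comm],
    mul_assoc, coeff_X_pow_mul', ← C_eq_natCast]
  split_ifs with h
  · rw [coeff_mul_C, coeff_one_add_X_pow, Nat.cast_id, Nat.cast_id, mul_comm]
  · rfl

lemma TT_lt : ∀ n, 2 ≤ n → ∀ k, k < n → TT n k < TT n (k+1) := by
  intro n hn
  induction n, hn using Nat.le_induction with
  | base =>
      intro k hk
      interval_cases k <;> rw [TT_formula, TT_formula] <;> decide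
  | succ n hn ih =>
      intro k hk
      match k with
      | 0 =>
          rw [TT_rec0, TT_rec1]
          have h1 : TT n 0 < TT n 1 := ih 0 (by omega)
          omega
      | 1 =>
          show TT (n+1) 1 < TT (n+1) 2
          have hr : TT (n+1) 2 = TT n 2 + TT n 1 + TT n 0 := TT_rec n 0
          rw [TT_rec1]
          have h1 : TT n 1 < TT n 2 := ih 1 (by omega)
          omega
      | (j+2) =>
          show TT (n+1) (j+2) < TT (n+1) (j+3)
          have hr1 : TT (n+1) (j+2) = TT n (j+2) + TT n (j+1) + TT n j := TT_rec n j
          have hr2 : TT (n+1) (j+3) = TT n (j+3) + TT n (j+2) + TT n (j+1) := TT_rec n (j+1)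
          rcases Nat.lt_or_ge (j+3) (n+1) with hc | hc
          · have h1 : TT n j < TT n (j+1) := ih j (by omega)
            have h2 : TT n (j+1) < TT n (j+2) := ih (j+1) (by omega)
            have h3 : TT n (j+2) < TT n (j+3) := ih (j+2) (by omega)
            omega
          · have hs : TT n (j+3) = TT n (j+1) := by
              rw [TT_symm (show j+3 ≤ 2*n by omega)]
              congr 1
              omega
            have h2 : TT n j < TT n (j+1) := ih j (by omega)
            omega

lemma TT_mono : ∀ n, 2 ≤ n → ∀ k l, k ≤ l → l ≤ n → TT n k ≤ TT n l := by
  intro n hn k l hkl hln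
  induction l with
  | zero => simp_all
  | succ m ih =>
      rcases Nat.lt_or_ge k (m+1) with h | h
      · exact le_trans (ih (by omega) (by omega)) (le_of_lt (TT_lt n hn m (by omega)))
      · have : k = m + 1 := by omega
        simp [this]

lemma TT_BC : ∀ m : ℕ,
    TT (m+5) (m+4) + TT (m+5) (m+2) ≤ 2 * TT (m+5) (m+3) ∧
    TT (m+5) (m+5) + TT (m+5) (m+1) ≤ TT (m+5) (m+4) + TT (m+5) (m+2) := by
  intro m
  induction m with
  | zero =>
      constructor <;> simp only [TT_formula] <;> decide
  | succ m ih =>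
      obtain ⟨hB, hC⟩ := ih
      have r5 : TT (m+6) (m+5) = TT (m+5) (m+5) + TT (m+5) (m+4) + TT (m+5) (m+3) := TT_rec (m+5) (m+3)
      have r4 : TT (m+6) (m+4) = TT (m+5) (m+4) + TT (m+5) (m+3) + TT (m+5) (m+2) := TT_rec (m+5) (m+2)
      have r3 : TT (m+6) (m+3) = TT (m+5) (m+3) + TT (m+5) (m+2) + TT (m+5) (m+1) := TT_rec (m+5) (m+1)
      have r2 : TT (m+6) (m+2) = TT (m+5) (m+2) + TT (m+5) (m+1) + TT (m+5) m := TT_rec (m+5) m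
      have r6 : TT (m+6) (m+6) = TT (m+5) (m+6) + TT (m+5) (m+5) + TT (m+5) (m+4) := TT_rec (m+5) (m+4)
      have hs : TT (m+5) (m+6) = TT (m+5) (m+4) := by
        rw [TT_symm (show m+6 ≤ 2*(m+5) by omega)]
        congr 1
        omega
      have hm : TT (m+5) m ≤ TT (m+5) (m+2) := TT_mono (m+5) (by omega) m (m+2) (by omega) (by omega)
      constructor
      · show TT (m+6) (m+5) + TT (m+6) (m+3) ≤ 2 * TT (m+6) (m+4)
        omega
      · show TT (m+6) (m+6) + TT (m+6) (m+2) ≤ TT (m+6) (m+5) + TT (m+6) (m+3)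
        omega

lemma TT_A (m : ℕ) : 2 * TT (m+6) (m+6) + TT (m+6) (m+4) ≤ 3 * TT (m+6) (m+5) := by
  obtain ⟨hB, _⟩ := TT_BC m
  have r6 : TT (m+6) (m+6) = TT (m+5) (m+6) + TT (m+5) (m+5) + TT (m+5) (m+4) := TT_rec (m+5) (m+4)
  have r5 : TT (m+6) (m+5) = TT (m+5) (m+5) + TT (m+5) (m+4) + TT (m+5) (m+3) := TT_rec (m+5) (m+3)
  have r4 : TT (m+6) (m+4) = TT (m+5) (m+4) + TT (m+5) (m+3) + TT (m+5) (m+2) := TT_rec (m+5) (m+2)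
  have hs : TT (m+5) (m+6) = TT (m+5) (m+4) := by
    rw [TT_symm (show m+6 ≤ 2*(m+5) by omega)]
    congr 1
    omega
  have hm : TT (m+5) (m+4) ≤ TT (m+5) (m+5) := TT_mono (m+5) (by omega) (m+4) (m+5) (by omega) (by omega)
  omega

lemma central_step (m : ℕ) : (2*m+2).choose (m+1) ≤ 4 * (2*m).choose m := by
  have h := Nat.succ_mul_centralBinom_succ m
  have h2 : (m+1) * Nat.centralBinom (m+1) ≤ (m+1) * (4 * Nat.centralBinom m) := by
    rw [h]; ring_nf; nlinarith [Nat.centralBinom m]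
  have h3 := Nat.le_of_mul_le_mul_left h2 (by omega)
  simpa [Nat.centralBinom, show 2*(m+1) = 2*m+2 by ring] using h3

lemma TT_even : ∀ k : ℕ, TT (2*k+8) (2*k+7) + (2*k+8).choose (k+4) < TT (2*k+8) (2*k+8) := by
  intro k
  induction k with
  | zero => simp only [TT_formula]; decide
  | succ k ih =>
      set j := 2*k with hj
      have r1 : TT (j+10) (j+10) = TT (j+9) (j+10) + TT (j+9) (j+9) + TT (j+9) (j+8) := TT_rec (j+9) (j+8)
      have r2 : TT (j+10) (j+9) = TT (j+9) (j+9) + TT (j+9) (j+8) + TT (j+9) (j+7) := TT_rec (j+9) (j+7)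
      have hs : TT (j+9) (j+10) = TT (j+9) (j+8) := by
        rw [TT_symm (show j+10 ≤ 2*(j+9) by omega)]
        congr 1
        omega
      have r3 : TT (j+9) (j+8) = TT (j+8) (j+8) + TT (j+8) (j+7) + TT (j+8) (j+6) := TT_rec (j+8) (j+6)
      have r4 : TT (j+9) (j+7) = TT (j+8) (j+7) + TT (j+8) (j+6) + TT (j+8) (j+5) := TT_rec (j+8) (j+5)
      have hA : 2 * TT (j+8) (j+8) + TT (j+8) (j+6) ≤ 3 * TT (j+8) (j+7) := TT_A (j+2)
      have hB : TT (j+8) (j+7) + TT (j+8) (j+5) ≤ 2 * TT (j+8) (j+6) := (TT_BC (j+3)).1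
      have hm : TT (j+8) (j+6) ≤ TT (j+8) (j+7) := TT_mono (j+8) (by omega) (j+6) (j+7) (by omega) (by omega)
      have hc : (2*(k+1)+8).choose ((k+1)+4) ≤ 4 * (2*k+8).choose (k+4) := by
        have := central_step (k+4)
        have e1 : 2*(k+4)+2 = 2*(k+1)+8 := by ring
        have e2 : (k+4)+1 = (k+1)+4 := by ring
        have e3 : 2*(k+4) = 2*k+8 := by ring
        rw [e1, e2, e3] at this
        exact this
      have ih' : TT (j+8) (j+7) + (j+8).choose (k+4) < TT (j+8) (j+8) := ih
      show TT (j+10) (j+9) + (2*(k+1)+8).choose ((k+1)+4) < TT (j+10) (j+10)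
      have hcc : (2*(k+1)+8).choose ((k+1)+4) ≤ 4 * (j+8).choose (k+4) := hc
      omega

lemma trinom_eq {n a b c : ℕ} (h : a + b + c = n) :
    trinom n a b c = n.choose c * (a + b).choose a := by
  have hc : c ≤ n := by omega
  have hab : a + b = n - c := by omega
  have h1 : n.factorial = n.choose c * c.factorial * (n - c).factorial :=
    (Nat.choose_mul_factorial_mul_factorial hc).symm
  have h2 : (a + b).factorial = (a + b).choose a * a.factorial * b.factorial := by
    have := Nat.choose_mul_factorial_mul_factorial (show a ≤ a + b by omega)
    simpa using this.symm
  rw [trinom, h1, ← hab, h2]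
  have hpos : 0 < a.factorial * b.factorial * c.factorial :=
    Nat.mul_pos (Nat.mul_pos a.factorial_pos b.factorial_pos) c.factorial_pos
  rw [show n.choose c * c.factorial * ((a + b).choose a * a.factorial * b.factorial)
      = (n.choose c * (a + b).choose a) * (a.factorial * b.factorial * c.factorial) by ring]
  exact Nat.mul_div_cancel _ hpos

lemma sum_L (n : ℕ) (hn : 1 ≤ n) :
    ∑ i ∈ Finset.range ((n - 1) / 2 + 1), trinom n (i + 1) (n - 2 * i - 1) i
      = TT n (n - 1) := by
  rw [TT_formula]
  rw [← Finset.sum_subset (Finset.range_subset_range.2 (show (n-1)/2 + 1 ≤ n + 1 by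
      have : (n-1)/2 ≤ n - 1 := Nat.div_le_self _ _
      omega))]
  · refine Finset.sum_congr rfl fun i hi => ?_
    rw [Finset.mem_range] at hi
    have h2i : 2 * i ≤ n - 1 := by
      have h1 : i ≤ (n-1)/2 := by omega
      have h2 := (Nat.le_div_iff_mul_le (k := 2) (by norm_num)).1 h1
      omega
    rw [if_pos h2i]
    have habc : (i+1) + (n - 2*i - 1) + i = n := by omega
    rw [trinom_eq habc]
    have e1 : (i+1) + (n - 2*i - 1) = n - i := by omega
    have e2 : n - 1 - 2*i = (n - i) - (i + 1) := by omega
    rw [e1, e2, Nat.choose_symm (show i+1 ≤ n - i by omega)]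
  · intro i hi1 hi2
    rw [Finset.mem_range] at hi1
    rw [Finset.mem_range, not_lt] at hi2
    rw [if_neg]
    intro hle
    have : i ≤ (n-1)/2 := (Nat.le_div_iff_mul_le (by norm_num)).2 (by omega)
    omega

lemma sum_R (n : ℕ) (hn : 1 ≤ n) :
    ∑ i ∈ Finset.range (n / 2 + 1), trinom n i (n - 2 * i) i = TT n n := by
  rw [TT_formula]
  rw [← Finset.sum_subset (Finset.range_subset_range.2 (show n/2 + 1 ≤ n + 1 by
      have := Nat.div_le_self n 2
      omega))]
  · refine Finset.sum_congr rfl fun i hi => ?_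
    rw [Finset.mem_range] at hi
    have h2i : 2 * i ≤ n := by
      have h1 : i ≤ n/2 := by omega
      have h2 := (Nat.le_div_iff_mul_le (k := 2) (by norm_num)).1 h1
      omega
    rw [if_pos h2i]
    have habc : i + (n - 2*i) + i = n := by omega
    rw [trinom_eq habc]
    have e1 : i + (n - 2*i) = n - i := by omega
    have e2 : n - 2*i = (n - i) - i := by omega
    rw [e1, e2, Nat.choose_symm (show i ≤ n - i by omega)]
  · intro i hi1 hi2
    rw [Finset.mem_range] at hi1
    rw [Finset.mem_range, not_lt] at hi2
    rw [if_neg]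
    intro hle
    have : i ≤ n/2 := (Nat.le_div_iff_mul_le (by norm_num)).2 (by omega)
    omega

end Aux

/-- For all odd `n ≥ 3` and all even `n ≥ 8`,
`∑_{i=0}^{⌊(n-1)/2⌋} n!/((i+1)!(n-2i-1)!i!) < ∑_{i=0}^{⌊(n-1)/2⌋} n!/(i!(n-2i)!i!)`. -/
theorem trinomial_sum_strict_ineq (n : ℕ)
    (h : (Odd n ∧ 3 ≤ n) ∨ (Even n ∧ 8 ≤ n)) :
    ∑ i ∈ Finset.range ((n - 1) / 2 + 1), trinom n (i + 1) (n - 2 * i - 1) i <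
    ∑ i ∈ Finset.range ((n - 1) / 2 + 1), trinom n i (n - 2 * i) i := by
  rcases h with ⟨⟨m, hm⟩, h3⟩ | ⟨he, h8⟩
  · -- odd case
    have hn1 : 1 ≤ n := by omega
    rw [sum_L n hn1]
    have hr : (n - 1) / 2 + 1 = n / 2 + 1 := by omega
    rw [hr, sum_R n hn1]
    have := TT_lt n (by omega) (n-1) (by omega)
    have e : n - 1 + 1 = n := by omega
    rwa [e] at this
  · -- even case
    obtain ⟨m, hm⟩ := he
    have hk : ∃ k, n = 2*k + 8 := ⟨m - 4, by omega⟩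
    obtain ⟨k, rfl⟩ := hk
    have hn1 : (1:ℕ) ≤ 2*k+8 := by omega
    rw [sum_L _ hn1]
    have key := TT_even k
    have e3 : 2*k+8-1 = 2*k+7 := by omega
    have e4 : (2*k+7)/2 + 1 = k + 4 := by omega
    rw [e3, e4]
    have hs1 : ∑ i ∈ Finset.range (k+5), trinom (2*k+8) i (2*k+8 - 2*i) i
        = TT (2*k+8) (2*k+8) := by
      have hh := sum_R _ hn1
      rwa [show (2*k+8)/2+1 = k+5 by omega] at hh
    have hs2 : ∑ i ∈ Finset.range (k+5), trinom (2*k+8) i (2*k+8 - 2*i) i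
        = ∑ i ∈ Finset.range (k+4), trinom (2*k+8) i (2*k+8 - 2*i) i
          + trinom (2*k+8) (k+4) (2*k+8 - 2*(k+4)) (k+4) :=
      Finset.sum_range_succ _ _
    have hf : trinom (2*k+8) (k+4) (2*k+8 - 2*(k+4)) (k+4) = (2*k+8).choose (k+4) := by
      rw [show 2*k+8 - 2*(k+4) = 0 by omega,
        trinom_eq (show (k+4) + 0 + (k+4) = 2*k+8 by omega)]
      simp
    omega
end

section
/- For all n ≥ 7 and all integers I with (n-1)/3 ≤ I ≤ (n-2)/2, one has ∑_{i=0}^{I} n!/(i!·(n-2i-1)!·(i+1)!) < ∑_{i=0}^{I} n!/((i+1)!·(n-2i-2)!·(i+1)!). -/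
/-!
Let `T n m` be the coefficient of `X ^ m` in `(1 + X + X ^ 2) ^ n`. Grouping the trinomial
coefficients by degree, the left sum is the part `i ≤ I` of `T n (n + 1) = ∑ C(n,i) C(n-i,i+1)`
and the right sum is the part `i ≤ I` of `T n n - 1`. Beyond `I` the terms compare the other way,
since their ratio is `(n - 2i - 1) / (i + 1) ≤ 1` there, so it suffices that
`T n n - T n (n + 1) ≥ 2`. By the recurrence `T (n+1) (m+2) = T n (m+2) + T n (m+1) + T n m`,
together with the symmetry and unimodality of each row, this gap does not decrease from `n` to
`n + 2`, and it equals `3` and `6` at `n = 4, 5`.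
-/

open Finset Polynomial

lemma trinom_eq_choose_mul_choose {n a b c : ℕ} (h : a + b + c = n) :
    trinom n a b c = n.choose a * (n - a).choose c := by
  have hfac : n.choose a * (n - a).choose c * (a.factorial * b.factorial * c.factorial)
      = n.factorial := by
    rw [← Nat.choose_mul_factorial_mul_factorial (show a ≤ n by omega),
      ← Nat.choose_mul_factorial_mul_factorial (show c ≤ n - a by omega),
      show n - a - c = b by omega]
    ring
  rw [trinom, ← hfac, Nat.mul_div_cancel _ (by positivity)]

lemma choose_succ_mul_choose_mul (n a c : ℕ) :
    n.choose (a + 1) * (n - (a + 1)).choose c * (a + 1)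
      = n.choose a * (n - a).choose c * (n - a - c) := by
  rcases le_or_gt n a with h | h
  · simp [Nat.choose_eq_zero_of_lt (show n < a + 1 by omega), Nat.sub_eq_zero_of_le h]
  obtain ⟨m, rfl⟩ : ∃ m, n = a + 1 + m := ⟨n - (a + 1), by omega⟩
  have h1 := Nat.choose_succ_right_eq (a + 1 + m) a
  have h2 := Nat.choose_mul_succ_eq m c
  rw [show a + 1 + m - (a + 1) = m by omega, show a + 1 + m - a = m + 1 by omega,
    show m + 1 - c = a + 1 + m - a - c by omega] at *
  calc _ = (a + 1 + m).choose (a + 1) * (a + 1) * m.choose c := by ring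
    _ = (a + 1 + m).choose a * (m.choose c * (m + 1)) := by rw [h1]; ring
    _ = _ := by rw [h2]; ring

lemma choose_succ_mul_choose_le {n i : ℕ} (h : n ≤ 3 * i + 2) :
    n.choose (i + 1) * (n - (i + 1)).choose (i + 1) ≤ n.choose i * (n - i).choose (i + 1) := by
  refine Nat.le_of_mul_le_mul_right ?_ i.succ_pos
  rw [choose_succ_mul_choose_mul]
  exact Nat.mul_le_mul_left _ (by omega)

noncomputable def trinomialTriangle (n m : ℕ) : ℕ :=
  ((1 + X + X ^ 2 : ℕ[X]) ^ n).coeff m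

-- Expand `(1 + X * (1 + X)) ^ n` binomially; `i` counts the factors `1`.
lemma trinomialTriangle_add (n k : ℕ) :
    trinomialTriangle n (n + k) = ∑ i ∈ range (n + 1), n.choose i * (n - i).choose (i + k) := by
  rw [trinomialTriangle, show (1 + X + X ^ 2 : ℕ[X]) = 1 + X * (1 + X) by ring, add_pow,
    finsetSum_coeff]
  refine sum_congr rfl fun i hi => ?_
  have hi : i ≤ n := Nat.lt_succ_iff.mp (mem_range.mp hi)
  rw [one_pow, one_mul, mul_pow, ← C_eq_natCast, coeff_mul_C, coeff_X_pow_mul',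
    if_pos (by omega), coeff_one_add_X_pow, show n + k - (n - i) = i + k by omega,
    Nat.cast_id, Nat.cast_id, mul_comm]

lemma trinomialTriangle_succ_add_two (n m : ℕ) :
    trinomialTriangle (n + 1) (m + 2) =
      trinomialTriangle n (m + 2) + trinomialTriangle n (m + 1) + trinomialTriangle n m := by
  simp only [trinomialTriangle, pow_succ _ n, mul_add, mul_one, coeff_add, coeff_mul_X,
    coeff_mul_X_pow]

lemma reflect_trinomial_pow (n : ℕ) :
    reflect (2 * n) ((1 + X + X ^ 2 : ℕ[X]) ^ n) = (1 + X + X ^ 2) ^ n := by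
  have hdeg : (1 + X + X ^ 2 : ℕ[X]).natDegree ≤ 2 := by compute_degree
  induction n with
  | zero => simp
  | succ n ih =>
    rw [pow_succ, mul_add_one, reflect_mul _ _ (F := 2 * n)
      (by rw [mul_comm]; exact natDegree_pow_le_of_le n hdeg) hdeg, ih]
    rw [show (1 + X + X ^ 2 : ℕ[X]) = X ^ 0 + X ^ 1 + X ^ 2 by simp]
    simp only [reflect_add, reflect_monomial, revAt_le (show 0 ≤ 2 by omega),
      revAt_le (show 1 ≤ 2 by omega), revAt_le le_rfl]
    ring

lemma trinomialTriangle_symm (n m : ℕ) (h : m ≤ 2 * n) :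
    trinomialTriangle n (2 * n - m) = trinomialTriangle n m := by
  rw [trinomialTriangle, ← reflect_trinomial_pow, coeff_reflect, revAt_le (by omega),
    Nat.sub_sub_self h, trinomialTriangle]

lemma trinomialTriangle_pred_eq_succ (n : ℕ) :
    trinomialTriangle (n + 1) n = trinomialTriangle (n + 1) (n + 2) := by
  rw [← trinomialTriangle_symm (n + 1) (n + 2) (by omega),
    show 2 * (n + 1) - (n + 2) = n by omega]

lemma trinomialTriangle_succ_le (n m : ℕ) (h : n ≤ m) :
    trinomialTriangle n (m + 1) ≤ trinomialTriangle n m := by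
  induction n generalizing m with
  | zero => simp [trinomialTriangle, coeff_one]
  | succ n ih =>
    obtain ⟨rfl, rfl⟩ | ⟨k, rfl⟩ : (n = 0 ∧ m = 1) ∨ ∃ k, m = k + 2 :=
      (by omega : m = 1 ∨ 2 ≤ m).imp (by omega) fun _ => ⟨m - 2, by omega⟩
    · simp [trinomialTriangle, coeff_one, coeff_X]
    have e₁ : trinomialTriangle (n + 1) (k + 3) = trinomialTriangle n (k + 3) +
        trinomialTriangle n (k + 2) + trinomialTriangle n (k + 1) :=
      trinomialTriangle_succ_add_two n (k + 1)
    have e₂ := trinomialTriangle_succ_add_two n k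
    suffices trinomialTriangle n (k + 3) ≤ trinomialTriangle n k from
      show trinomialTriangle (n + 1) (k + 3) ≤ _ by omega
    rcases (by omega : n ≤ k ∨ n = k + 1) with hn | rfl
    · exact (ih _ (by omega)).trans <| (ih _ (by omega)).trans (ih _ hn)
    · exact trinomialTriangle_pred_eq_succ k ▸ ih _ (by omega)

lemma trinomialTriangle_self (n : ℕ) :
    trinomialTriangle n n =
      ∑ i ∈ range n, n.choose (i + 1) * (n - (i + 1)).choose (i + 1) + 1 := by
  have h₀ := trinomialTriangle_add n 0
  simp only [add_zero] at h₀
  rw [h₀, sum_range_succ']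
  simp

/-- These are the Riordan numbers. -/
noncomputable def centralGap (n : ℕ) : ℕ :=
  trinomialTriangle n n - trinomialTriangle n (n + 1)

lemma centralGap_le_centralGap_add_two (n : ℕ) : centralGap n ≤ centralGap (n + 2) := by
  have e₁ := trinomialTriangle_succ_add_two (n + 1) n
  have e₂ := trinomialTriangle_succ_add_two (n + 1) (n + 1)
  have e₃ := trinomialTriangle_succ_add_two n n
  have e₄ := trinomialTriangle_succ_add_two n (n + 1)
  have hsymm := trinomialTriangle_pred_eq_succ n
  have h₁ := trinomialTriangle_succ_le n (n + 1) (by omega)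
  have h₂ := trinomialTriangle_succ_le n (n + 2) (by omega)
  simp only [centralGap, add_assoc, Nat.reduceAdd] at *
  omega

lemma two_le_centralGap : ∀ n, 4 ≤ n → 2 ≤ centralGap n
  | 4, _ | 5, _ => by rw [centralGap, trinomialTriangle_self, trinomialTriangle_add]; decide
  | n + 6, _ => (two_le_centralGap (n + 4) (by omega)).trans (centralGap_le_centralGap_add_two _)

/-- For all `n ≥ 7` and integers `I` with `(n-1)/3 ≤ I ≤ (n-2)/2`,
`∑_{i=0}^{I} n!/(i!(n-2i-1)!(i+1)!) < ∑_{i=0}^{I} n!/((i+1)!(n-2i-2)!(i+1)!)`. -/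
theorem trinomial_sum_strict_ineq_small (n I : ℕ) (hn : 7 ≤ n)
    (hI1 : n - 1 ≤ 3 * I) (hI2 : 2 * I ≤ n - 2) :
    ∑ i ∈ Finset.range (I + 1), trinom n i (n - 2 * i - 1) (i + 1) <
    ∑ i ∈ Finset.range (I + 1), trinom n (i + 1) (n - 2 * i - 2) (i + 1) := by
  set f := fun i => n.choose i * (n - i).choose (i + 1)
  set g := fun i => n.choose (i + 1) * (n - (i + 1)).choose (i + 1)
  have hL : ∑ i ∈ range (I + 1), trinom n i (n - 2 * i - 1) (i + 1) =
      ∑ i ∈ range (I + 1), f i :=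
    sum_congr rfl fun i hi => trinom_eq_choose_mul_choose (by simp only [mem_range] at hi; omega)
  have hR : ∑ i ∈ range (I + 1), trinom n (i + 1) (n - 2 * i - 2) (i + 1) =
      ∑ i ∈ range (I + 1), g i :=
    sum_congr rfl fun i hi => trinom_eq_choose_mul_choose (by simp only [mem_range] at hi; omega)
  have hA : ∑ i ∈ range (I + 1), f i + ∑ i ∈ Ico (I + 1) (n + 1), f i =
      trinomialTriangle n (n + 1) := by
    rw [sum_range_add_sum_Ico _ (by omega), trinomialTriangle_add]
  have hB : ∑ i ∈ range (I + 1), g i + ∑ i ∈ Ico (I + 1) n, g i + 1 =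
      trinomialTriangle n n := by
    rw [sum_range_add_sum_Ico _ (by omega), trinomialTriangle_self]
  have htail : ∑ i ∈ Ico (I + 1) n, g i ≤ ∑ i ∈ Ico (I + 1) (n + 1), f i :=
    calc ∑ i ∈ Ico (I + 1) n, g i ≤ ∑ i ∈ Ico (I + 1) n, f i :=
          sum_le_sum fun i hi => choose_succ_mul_choose_le (by simp only [mem_Ico] at hi; omega)
      _ ≤ _ := sum_le_sum_of_subset (Ico_subset_Ico le_rfl (by omega))
  have hgap := two_le_centralGap n (by omega)
  rw [centralGap] at hgap
  omega
end

section
/- For n ≥ 8, the n-th Riordan number γ_n satisfies γ_n > C(n, ⌊n/2⌋) when n is even; equivalently, γ_n − binom(n, n/2) > 0 for all even n ≥ 8. -/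
/-- The Riordan numbers: `γ₀ = 1`, `γ₁ = 0`, and
`γ_{n+2} = ((n+1)/(n+3)) (2 γ_{n+1} + 3 γ_n)` (the division is exact). -/
def riordan : ℕ → ℕ
  | 0 => 1
  | 1 => 0
  | n + 2 => (n + 1) * (2 * riordan (n + 1) + 3 * riordan n) / (n + 3)

lemma riordan_mono (n : ℕ) : riordan (n + 1) ≤ riordan (n + 2) := by
  match n with
  | 0 => simp [riordan]
  | k + 1 =>
    show riordan (k + 2) ≤ (k + 2) * (2 * riordan (k + 2) + 3 * riordan (k + 1)) / (k + 4)
    rw [Nat.le_div_iff_mul_le (by omega)]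
    nlinarith [riordan (k + 2), riordan (k + 1)]

/-- For all even `n ≥ 8`, the `n`-th Riordan number exceeds the central binomial
coefficient: `γ_n > C(n, n/2)`. -/
theorem riordan_gt_central_binom (n : ℕ) (hn : 8 ≤ n) (he : Even n) :
    n.choose (n / 2) < riordan n := by
  obtain ⟨m, rfl⟩ := he
  have hm : 4 ≤ m := by omega
  rw [show m + m = 2 * m from by ring, show 2 * m / 2 = m from by omega]
  clear hn
  induction m, hm using Nat.le_induction with
  | base => decide
  | succ m hm ih =>
    have hmono : riordan (2 * m) ≤ riordan (2 * m + 1) := by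
      have h := riordan_mono (2 * m - 1)
      have e1 : 2 * m - 1 + 1 = 2 * m := by omega
      have e2 : 2 * m - 1 + 2 = 2 * m + 1 := by omega
      rw [e1, e2] at h
      exact h
    have key : 4 * riordan (2 * m) ≤ riordan (2 * (m + 1)) := by
      rw [show 2 * (m + 1) = 2 * m + 2 from by ring]
      show 4 * riordan (2 * m) ≤
        (2 * m + 1) * (2 * riordan (2 * m + 1) + 3 * riordan (2 * m)) / (2 * m + 3)
      rw [Nat.le_div_iff_mul_le (by omega)]
      nlinarith [hmono, hm, riordan (2 * m)]
    have hcb : (m + 1) * (2 * (m + 1)).choose (m + 1)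
        = 2 * (2 * m + 1) * (2 * m).choose m := by
      have := Nat.succ_mul_centralBinom_succ m
      simpa [Nat.centralBinom] using this
    have hlt : (2 * (m + 1)).choose (m + 1) < 4 * riordan (2 * m) := by
      have h1 : (2 * m).choose m + 1 ≤ riordan (2 * m) := ih
      nlinarith [hcb, h1, Nat.choose_pos (show m ≤ 2 * m by omega)]
    omega
end

section
/- Let G = C_{p^n q} with p, q distinct primes, and let S be a minimal generating set of a transfer system on G. If T, B, D denote the numbers of top arrows, bottom arrows, and diagonal arrows in S respectively, then T + B ≤ n, T + D ≤ n + 1, and B + D ≤ n + 1. Consequently |S| ≤ 3k+1 if n = 2k and |S| ≤ 3k+2 if n = 2k+1. -/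
/-- A transfer system on a lattice (the abelian case: closure under composition and
restriction suffices). -/
def IsLatTS {L : Type*} [Lattice L] (T : Set (L × L)) : Prop :=
  (∀ p ∈ T, p.1 ≤ p.2) ∧
  (∀ x : L, (x, x) ∈ T) ∧
  (∀ a b c : L, (a, b) ∈ T → (b, c) ∈ T → (a, c) ∈ T) ∧
  (∀ a b : L, (a, b) ∈ T → ∀ c : L, c ≤ b → (a ⊓ c, c) ∈ T)

/-- The smallest lattice transfer system containing `S`. -/
def latGen {L : Type*} [Lattice L] (S : Set (L × L)) : Set (L × L) :=
  ⋂₀ {T | IsLatTS T ∧ S ⊆ T}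

/-- `S` is a minimal generating set (of non-identity intervals) for the transfer system
`T` on a lattice. -/
def IsLatMinGen {L : Type*} [Lattice L] (S T : Set (L × L)) : Prop :=
  S ⊆ T ∧ (∀ p ∈ S, p.1 ≠ p.2) ∧ latGen S = T ∧ ∀ s ∈ S, latGen (S \ {s}) ⊂ T

/-- The grid lattice `[n] × [1]`, modelling `Sub(C_{pⁿq})` with `(i, j) ↔ C_{pⁱqʲ}`. -/
abbrev Grid (n : ℕ) := Fin (n + 1) × Fin 2

/-- Top arrows `(i,1) → (j,1)`, `i < j`. -/
def IsTopArrow {n : ℕ} (p : Grid n × Grid n) : Prop :=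
  p.1.2 = 1 ∧ p.2.2 = 1 ∧ p.1.1 < p.2.1

/-- Bottom arrows `(i,0) → (j,0)`, `i < j`. -/
def IsBottomArrow {n : ℕ} (p : Grid n × Grid n) : Prop :=
  p.1.2 = 0 ∧ p.2.2 = 0 ∧ p.1.1 < p.2.1

/-- Diagonal arrows `(i,0) → (j,1)`, `i ≤ j`. -/
def IsDiagArrow {n : ℕ} (p : Grid n × Grid n) : Prop :=
  p.1.2 = 0 ∧ p.2.2 = 1 ∧ p.1.1 ≤ p.2.1

/-!
A minimal generating set `S` is independent: no member lies in the transfer system generated by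
the others. Of two arrows with a common source and targets in one row, the shorter is a restriction
of the longer, so top arrows, and likewise diagonal arrows, are determined by their source index.
A bottom arrow `b = (i,0) → (j,0)` is sent instead to the furthest `k` with `(i,0) → (k,0)`
generated by `S \ {b}`: then `i ≤ k < j`, distinct bottom arrows get distinct `k`, and `k` is the
source index of no other arrow of `S` moving right, since composing with that arrow (restricted to
the bottom row) would reach beyond `k`. So tops and bottoms inject into `{0, …, n-1}`, and so do
bottoms and non-vertical diagonals; at most one diagonal is vertical. For tops and diagonals, each
diagonal other than the one `M` with rightmost source is sent to the furthest `k` with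
`(i,0) → (k,1)` generated without it, which exists because `M` restricts to `(i,0) → (i,1)`.
Adding `T + B ≤ n`, `T + D ≤ n + 1` and `B + D ≤ n + 1` gives `2 |S| ≤ 3 n + 2`.
-/

section LatGen

variable {L : Type*} [Lattice L] {S X : Set (L × L)} {p q : L × L}

theorem mem_latGen : p ∈ latGen S ↔ ∀ U, IsLatTS U → S ⊆ U → p ∈ U := by
  simp only [latGen, Set.mem_sInter, Set.mem_ofPred_eq, and_imp]

theorem subset_latGen : S ⊆ latGen S :=
  fun _ hp => mem_latGen.2 fun _ _ hSU => hSU hp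

theorem latGen_subset_latGen (h : S ⊆ latGen X) : latGen S ⊆ latGen X :=
  fun _ hp => mem_latGen.2 fun U hU hXU =>
    mem_latGen.1 hp U hU fun _ hs => mem_latGen.1 (h hs) U hU hXU

theorem latGen_refl (S : Set (L × L)) (x : L) : (x, x) ∈ latGen S :=
  mem_latGen.2 fun _ hU _ => hU.2.1 x

theorem latGen_trans {a b c : L} (hab : (a, b) ∈ latGen S) (hbc : (b, c) ∈ latGen S) :
    (a, c) ∈ latGen S :=
  mem_latGen.2 fun U hU hSU =>
    hU.2.2.1 a b c (mem_latGen.1 hab U hU hSU) (mem_latGen.1 hbc U hU hSU)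

theorem latGen_restrict {a b c : L} (hab : (a, b) ∈ latGen S) (hcb : c ≤ b) :
    (a ⊓ c, c) ∈ latGen S :=
  mem_latGen.2 fun U hU hSU => hU.2.2.2 a b (mem_latGen.1 hab U hU hSU) c hcb

theorem mem_latGen_diff_singleton (hq : q ∈ S) (hqp : q ≠ p) : q ∈ latGen (S \ {p}) :=
  subset_latGen ⟨hq, hqp⟩

def IsLatIndep (S : Set (L × L)) : Prop :=
  ∀ s ∈ S, s ∉ latGen (S \ {s})

theorem IsLatMinGen.isLatIndep {T : Set (L × L)} (hS : IsLatMinGen S T) : IsLatIndep S := by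
  intro s hs hgen
  have hsub : S ⊆ latGen (S \ {s}) := fun x hx => by
    by_cases hxs : x = s
    · exact hxs ▸ hgen
    · exact mem_latGen_diff_singleton hx hxs
  exact (hS.2.2.2 s hs).not_subset (hS.2.2.1 ▸ latGen_subset_latGen hsub)

theorem IsLatIndep.eq_of_restrict (hS : IsLatIndep S) (hp : p ∈ S) (hq : q ∈ S)
    (hle : p.2 ≤ q.2) (hinf : q.1 ⊓ p.2 = p.1) : p = q := by
  by_contra hpq
  apply hS p hp
  simpa [hinf] using latGen_restrict (mem_latGen_diff_singleton hq (Ne.symm hpq)) hle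

theorem IsLatIndep.eq_of_fst_eq (hS : IsLatIndep S) (hp : p ∈ S) (hq : q ∈ S)
    (hfst : p.1 = q.1) (hp_le : p.1 ≤ p.2) (hq_le : q.1 ≤ q.2) (htot : p.2 ≤ q.2 ∨ q.2 ≤ p.2) :
    p = q := by
  rcases htot with h | h
  · exact hS.eq_of_restrict hp hq h (by rw [← hfst, inf_eq_left.2 hp_le])
  · exact (hS.eq_of_restrict hq hp h (by rw [hfst, inf_eq_left.2 hq_le])).symm

end LatGen

theorem Set.ncard_add_ncard_le_of_injOn {α β : Type*} {A B : Set α} {C : Set β} {f g : α → β}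
    (hf : Set.InjOn f A) (hg : Set.InjOn g B) (hfC : Set.MapsTo f A C) (hgC : Set.MapsTo g B C)
    (hfg : ∀ a ∈ A, ∀ b ∈ B, f a ≠ g b) (hC : C.Finite) : A.ncard + B.ncard ≤ C.ncard := by
  have hdisj : Disjoint (f '' A) (g '' B) := by
    rw [Set.disjoint_left]
    rintro _ ⟨a, ha, rfl⟩ ⟨b, hb, hab⟩
    exact hfg a ha b hb hab.symm
  rw [← hf.ncard_image, ← hg.ncard_image,
    ← Set.ncard_union_eq hdisj (hC.subset hfC.image_subset) (hC.subset hgC.image_subset)]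
  exact Set.ncard_le_ncard (Set.union_subset hfC.image_subset hgC.image_subset) hC

theorem Fin.ncard_Iio_last (n : ℕ) : (Set.Iio (Fin.last n)).ncard = n := by
  rw [← Set.coe_toFinset (Set.Iio _), Set.ncard_coe_finset]
  simp

section Arrows

variable {n : ℕ} {p : Grid n × Grid n}

theorem IsTopArrow.fst_le_snd (h : IsTopArrow p) : p.1 ≤ p.2 :=
  Prod.mk_le_mk.2 ⟨h.2.2.le, (h.1.trans h.2.1.symm).le⟩

theorem IsDiagArrow.fst_le_snd (h : IsDiagArrow p) : p.1 ≤ p.2 :=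
  Prod.mk_le_mk.2 ⟨h.2.2, by rw [h.1]; exact Fin.zero_le _⟩

end Arrows

namespace Grid

variable {n : ℕ} {X S : Set (Grid n × Grid n)} {p : Grid n × Grid n}

theorem eq_mk_of_snd_eq {a b : Fin 2} (h₁ : p.1.2 = a) (h₂ : p.2.2 = b) :
    p = ((p.1.1, a), (p.2.1, b)) := by
  rw [← h₁, ← h₂]

theorem mem_latGen_restrict_bottom {a c k : Fin (n + 1)} {e e' : Fin 2}
    (h : (((a, e) : Grid n), ((c, e') : Grid n)) ∈ latGen X) (hak : a ≤ k) (hkc : k ≤ c) :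
    (((a, 0) : Grid n), ((k, 0) : Grid n)) ∈ latGen X := by
  simpa [hak] using latGen_restrict h (c := ((k, 0) : Grid n)) (Prod.mk_le_mk.2 ⟨hkc, by simp⟩)

/-- The largest `k` with `(i,0) → (k,ε)` in `latGen X`, and `0` if there is none. -/
noncomputable def reach (X : Set (Grid n × Grid n)) (i : Fin (n + 1)) (ε : Fin 2) : Fin (n + 1) :=
  by classical exact
    (Finset.univ.filter fun k => (((i, 0) : Grid n), ((k, ε) : Grid n)) ∈ latGen X).sup id

theorem le_reach {i k : Fin (n + 1)} {ε : Fin 2}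
    (h : (((i, 0) : Grid n), ((k, ε) : Grid n)) ∈ latGen X) : k ≤ reach X i ε := by
  classical
  exact Finset.le_sup (f := id) (Finset.mem_filter.2 ⟨Finset.mem_univ _, h⟩)

theorem reach_mem {i k : Fin (n + 1)} {ε : Fin 2}
    (h : (((i, 0) : Grid n), ((k, ε) : Grid n)) ∈ latGen X) :
    (((i, 0) : Grid n), ((reach X i ε, ε) : Grid n)) ∈ latGen X := by
  classical
  unfold reach
  obtain ⟨m, hm, hsup⟩ := Finset.exists_mem_eq_sup
    (Finset.univ.filter fun k => (((i, 0) : Grid n), ((k, ε) : Grid n)) ∈ latGen X)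
    ⟨k, Finset.mem_filter.2 ⟨Finset.mem_univ _, h⟩⟩ id
  rw [hsup]
  exact (Finset.mem_filter.1 hm).2

theorem le_reach_of_mem {i r c : Fin (n + 1)} {e ε : Fin 2}
    (hv : (((i, 0) : Grid n), ((i, ε) : Grid n)) ∈ latGen X) (hir : i ≤ r) (hr : r ≤ reach X i ε)
    (he : e ≤ ε) (h : (((r, e) : Grid n), ((c, ε) : Grid n)) ∈ latGen X) : c ≤ reach X i ε := by
  have hto : (((i, 0) : Grid n), ((r, e) : Grid n)) ∈ latGen X := by
    simpa [hir] using
      latGen_restrict (reach_mem hv) (c := ((r, e) : Grid n)) (Prod.mk_le_mk.2 ⟨hr, he⟩)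
  exact le_reach (latGen_trans hto h)

noncomputable def reachWithout (S : Set (Grid n × Grid n)) (p : Grid n × Grid n) : Fin (n + 1) :=
  reach (S \ {p}) p.1.1 p.2.2

def ReachesTargetRow (S : Set (Grid n × Grid n)) (p : Grid n × Grid n) : Prop :=
  p.1.2 = 0 ∧ p.1.1 ≤ p.2.1 ∧
    (((p.1.1, 0) : Grid n), ((p.1.1, p.2.2) : Grid n)) ∈ latGen (S \ {p})

theorem ReachesTargetRow.le_reachWithout (hp : ReachesTargetRow S p) :
    p.1.1 ≤ reachWithout S p :=
  le_reach hp.2.2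

theorem reachWithout_lt (hS : IsLatIndep S) (hpS : p ∈ S) (hp : ReachesTargetRow S p) :
    reachWithout S p < p.2.1 := by
  by_contra! hge
  apply hS p hpS
  have := latGen_restrict (reach_mem hp.2.2) (c := p.2) (Prod.mk_le_mk.2 ⟨hge, le_rfl⟩)
  convert this using 1
  ext <;> simp [hp.1, hp.2.1]

theorem ReachesTargetRow.ne_reachWithout {r c : Fin (n + 1)} {e : Fin 2}
    (hp : ReachesTargetRow S p) (he : e ≤ p.2.2)
    (h : (((r, e) : Grid n), ((c, p.2.2) : Grid n)) ∈ latGen (S \ {p})) (hrc : r < c) :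
    r ≠ reachWithout S p := by
  rintro rfl
  exact hrc.not_ge (le_reach_of_mem hp.2.2 hp.le_reachWithout le_rfl he h)

theorem reachWithout_injOn (hS : IsLatIndep S) (ε : Fin 2) :
    Set.InjOn (reachWithout S) {p ∈ S | ReachesTargetRow S p ∧ p.2.2 = ε} := by
  intro p ⟨hpS, hp, hpε⟩ q ⟨hqS, hq, hqε⟩ hpq
  wlog hsrc : p.1.1 ≤ q.1.1 generalizing p q
  · exact (this hqS hq hqε hpS hp hpε hpq.symm (le_of_not_ge hsrc)).symm
  by_contra hne
  have hqp : q ∈ latGen (S \ {p}) := mem_latGen_diff_singleton hqS (Ne.symm hne)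
  rw [eq_mk_of_snd_eq hq.1 (hqε.trans hpε.symm)] at hqp
  have hle :=
    le_reach_of_mem hp.2.2 hsrc (hq.le_reachWithout.trans_eq hpq.symm) (Fin.zero_le _) hqp
  exact (reachWithout_lt hS hqS hq).not_ge (hle.trans_eq hpq)

theorem le_total_of_snd_eq {x y : Grid n} (h : x.2 = y.2) : x ≤ y ∨ y ≤ x := by
  rcases le_total x.1 y.1 with h₁ | h₁
  · exact Or.inl (Prod.mk_le_mk.2 ⟨h₁, h.le⟩)
  · exact Or.inr (Prod.mk_le_mk.2 ⟨h₁, h.ge⟩)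

theorem injOn_fst_fst (hS : IsLatIndep S) (a b : Fin 2) :
    Set.InjOn (fun p => p.1.1) {p ∈ S | p.1.2 = a ∧ p.2.2 = b ∧ p.1 ≤ p.2} := by
  intro p ⟨hpS, hpa, hpb, hp⟩ q ⟨hqS, hqa, hqb, hq⟩ hpq
  exact hS.eq_of_fst_eq hpS hqS (Prod.ext hpq (hpa.trans hqa.symm)) hp hq
    (le_total_of_snd_eq (hpb.trans hqb.symm))

theorem ncard_vertical_le_one (hS : IsLatIndep S) :
    {p ∈ S | IsDiagArrow p ∧ p.1.1 = p.2.1}.ncard ≤ 1 := by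
  refine (Set.ncard_le_one (Set.toFinite _)).2 ?_
  intro p ⟨hpS, hp, hpv⟩ q ⟨hqS, hq, hqv⟩
  wlog hpq : p.1.1 ≤ q.1.1 generalizing p q
  · exact (this q hqS hq hqv p hpS hp hpv (le_of_not_ge hpq)).symm
  refine hS.eq_of_restrict hpS hqS (Prod.mk_le_mk.2 ⟨?_, ?_⟩) ?_
  · rw [← hpv, ← hqv]; exact hpq
  · rw [hp.2.1, hq.2.1]
  · rw [eq_mk_of_snd_eq hp.1 hp.2.1, eq_mk_of_snd_eq hq.1 hq.2.1]
    simp [← hpv, hpq]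

theorem reachesTargetRow_of_isBottomArrow (hp : IsBottomArrow p) : ReachesTargetRow S p :=
  ⟨hp.1, hp.2.2.le, by rw [hp.2.1]; exact latGen_refl _ _⟩

theorem reachesTargetRow_of_isDiagArrow {M : Grid n × Grid n} (hp : IsDiagArrow p)
    (hMS : M ∈ S) (hM : IsDiagArrow M) (hMp : M ≠ p) (hpM : p.1.1 ≤ M.1.1) :
    ReachesTargetRow S p := by
  refine ⟨hp.1, hp.2.2, ?_⟩
  have hMS' := mem_latGen_diff_singleton hMS hMp
  rw [eq_mk_of_snd_eq hM.1 hM.2.1] at hMS'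
  have := latGen_restrict hMS' (c := ((p.1.1, 1) : Grid n))
    (Prod.mk_le_mk.2 ⟨hpM.trans hM.2.2, le_rfl⟩)
  simpa [hp.2.1, hpM] using this

theorem ne_reachWithout_of_isBottomArrow {g : Grid n × Grid n} (hp : IsBottomArrow p)
    (hgS : g ∈ S) (hgp : g ≠ p) (hg : g.1.1 < g.2.1) : g.1.1 ≠ reachWithout S p := by
  refine (reachesTargetRow_of_isBottomArrow hp).ne_reachWithout (e := 0) (Fin.zero_le _) ?_ hg
  rw [hp.2.1]
  exact mem_latGen_restrict_bottom (mem_latGen_diff_singleton hgS hgp) hg.le le_rfl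

theorem ne_reachWithout_of_isTopArrow {t : Grid n × Grid n} (hp : ReachesTargetRow S p)
    (hp1 : p.2.2 = 1) (htS : t ∈ S) (ht : IsTopArrow t) : t.1.1 ≠ reachWithout S p := by
  have htp : t ≠ p := fun h => by simpa [h, hp.1] using ht.1
  refine hp.ne_reachWithout (e := 1) hp1.ge ?_ ht.2.2
  have htS' := mem_latGen_diff_singleton htS htp
  rwa [hp1, ← eq_mk_of_snd_eq ht.1 ht.2.1]

theorem ncard_top_add_ncard_bottom_le (hS : IsLatIndep S) :
    {p ∈ S | IsTopArrow p}.ncard + {p ∈ S | IsBottomArrow p}.ncard ≤ n := by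
  refine (Set.ncard_add_ncard_le_of_injOn (f := fun p => p.1.1) (g := reachWithout S)
    (A := {p ∈ S | IsTopArrow p}) (B := {p ∈ S | IsBottomArrow p}) ?_ ?_ ?_ ?_ ?_
    (Set.toFinite _)).trans_eq (Fin.ncard_Iio_last n)
  · refine (injOn_fst_fst hS 1 1).mono fun p hp => ?_
    exact ⟨hp.1, hp.2.1, hp.2.2.1, IsTopArrow.fst_le_snd hp.2⟩
  · refine (reachWithout_injOn hS 0).mono fun p hp => ?_
    exact ⟨hp.1, reachesTargetRow_of_isBottomArrow hp.2, hp.2.2.1⟩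
  · exact fun p ⟨_, hp⟩ => hp.2.2.trans_le (Fin.le_last _)
  · exact fun p ⟨hpS, hp⟩ =>
      (reachWithout_lt hS hpS (reachesTargetRow_of_isBottomArrow hp)).trans_le (Fin.le_last _)
  · intro t ⟨htS, ht⟩ b ⟨_, hb⟩
    exact ne_reachWithout_of_isBottomArrow hb htS (fun h => by simpa [h, hb.1] using ht.1) ht.2.2

theorem ncard_top_add_ncard_diag_le (hS : IsLatIndep S) :
    {p ∈ S | IsTopArrow p}.ncard + {p ∈ S | IsDiagArrow p}.ncard ≤ n + 1 := by
  rcases Set.eq_empty_or_nonempty {p ∈ S | IsDiagArrow p} with hD | hD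
  · rw [hD, Set.ncard_empty]
    have := ncard_top_add_ncard_bottom_le hS
    omega
  obtain ⟨M, ⟨hMS, hM⟩, hMmax⟩ := Set.exists_max_image _ (fun p => p.1.1) (Set.toFinite _) hD
  have hreach : ∀ p ∈ {p ∈ S | IsDiagArrow p} \ {M}, ReachesTargetRow S p :=
    fun p ⟨⟨hpS, hp⟩, hpM⟩ =>
      reachesTargetRow_of_isDiagArrow hp hMS hM (Ne.symm hpM) (hMmax p ⟨hpS, hp⟩)
  have hcount := Set.ncard_add_ncard_le_of_injOn (f := fun p => p.1.1) (g := reachWithout S)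
    (A := {p ∈ S | IsTopArrow p}) (B := {p ∈ S | IsDiagArrow p} \ {M}) ?_ ?_ ?_ ?_ ?_
    (Set.toFinite (Set.Iio (Fin.last n)))
  · rw [Fin.ncard_Iio_last] at hcount
    have := Set.ncard_sdiff_singleton_add_one (s := {p ∈ S | IsDiagArrow p}) ⟨hMS, hM⟩
    omega
  · refine (injOn_fst_fst hS 1 1).mono fun p hp => ?_
    exact ⟨hp.1, hp.2.1, hp.2.2.1, IsTopArrow.fst_le_snd hp.2⟩
  · refine (reachWithout_injOn hS 1).mono fun p hp => ?_
    exact ⟨hp.1.1, hreach p hp, hp.1.2.2.1⟩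
  · exact fun p ⟨_, hp⟩ => hp.2.2.trans_le (Fin.le_last _)
  · exact fun p hp => (reachWithout_lt hS hp.1.1 (hreach p hp)).trans_le (Fin.le_last _)
  · exact fun t ⟨htS, ht⟩ d hd => ne_reachWithout_of_isTopArrow (hreach d hd) hd.1.2.2.1 htS ht

theorem ncard_bottom_add_ncard_diag_le (hS : IsLatIndep S) :
    {p ∈ S | IsBottomArrow p}.ncard + {p ∈ S | IsDiagArrow p}.ncard ≤ n + 1 := by
  have hcount := Set.ncard_add_ncard_le_of_injOn (f := fun p => p.1.1) (g := reachWithout S)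
    (A := {p ∈ S | IsDiagArrow p ∧ p.1.1 ≠ p.2.1}) (B := {p ∈ S | IsBottomArrow p})
    ?_ ?_ ?_ ?_ ?_
    (Set.toFinite (Set.Iio (Fin.last n)))
  · rw [Fin.ncard_Iio_last] at hcount
    have hsplit : {p ∈ S | IsDiagArrow p}.ncard ≤ {p ∈ S | IsDiagArrow p ∧ p.1.1 ≠ p.2.1}.ncard +
        {p ∈ S | IsDiagArrow p ∧ p.1.1 = p.2.1}.ncard := by
      refine (Set.ncard_le_ncard ?_ (Set.toFinite _)).trans (Set.ncard_union_le _ _)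
      intro p ⟨hpS, hp⟩
      by_cases hv : p.1.1 = p.2.1
      exacts [Or.inr ⟨hpS, hp, hv⟩, Or.inl ⟨hpS, hp, hv⟩]
    have := ncard_vertical_le_one hS
    omega
  · refine (injOn_fst_fst hS 0 1).mono fun p hp => ?_
    exact ⟨hp.1, hp.2.1.1, hp.2.1.2.1, IsDiagArrow.fst_le_snd hp.2.1⟩
  · refine (reachWithout_injOn hS 0).mono fun p hp => ?_
    exact ⟨hp.1, reachesTargetRow_of_isBottomArrow hp.2, hp.2.2.1⟩
  · exact fun p ⟨_, hp, hv⟩ => (lt_of_le_of_ne hp.2.2 hv).trans_le (Fin.le_last _)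
  · exact fun p ⟨hpS, hp⟩ =>
      (reachWithout_lt hS hpS (reachesTargetRow_of_isBottomArrow hp)).trans_le (Fin.le_last _)
  · intro d ⟨hdS, hd, hv⟩ b ⟨_, hb⟩
    exact ne_reachWithout_of_isBottomArrow hb hdS (fun h => by simpa [h, hb.2.1] using hd.2.1)
      (lt_of_le_of_ne hd.2.2 hv)

theorem isTopArrow_or_isBottomArrow_or_isDiagArrow (h : p.1 < p.2) :
    IsTopArrow p ∨ IsBottomArrow p ∨ IsDiagArrow p := by
  obtain ⟨⟨i, a⟩, ⟨j, b⟩⟩ := p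
  obtain ⟨hij, hab⟩ := Prod.mk_le_mk.1 h.le
  have hne : (i, a) ≠ (j, b) := h.ne
  simp only [IsTopArrow, IsBottomArrow, IsDiagArrow]
  fin_cases a <;> fin_cases b <;> simp_all [lt_iff_le_and_ne]

theorem ncard_le_top_add_bottom_add_diag {T : Set (Grid n × Grid n)} (hT : IsLatTS T)
    (hS : IsLatMinGen S T) :
    S.ncard ≤ {p ∈ S | IsTopArrow p}.ncard + {p ∈ S | IsBottomArrow p}.ncard +
      {p ∈ S | IsDiagArrow p}.ncard := by
  have hsub :
      S ⊆ {p ∈ S | IsTopArrow p} ∪ {p ∈ S | IsBottomArrow p} ∪ {p ∈ S | IsDiagArrow p} := by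
    intro p hpS
    rcases isTopArrow_or_isBottomArrow_or_isDiagArrow
      (lt_of_le_of_ne (hT.1 p (hS.1 hpS)) (hS.2.1 p hpS)) with h | h | h
    exacts [Or.inl (Or.inl ⟨hpS, h⟩), Or.inl (Or.inr ⟨hpS, h⟩), Or.inr ⟨hpS, h⟩]
  calc S.ncard ≤ _ := Set.ncard_le_ncard hsub (Set.toFinite _)
    _ ≤ _ := (Set.ncard_union_le _ _).trans (Nat.add_le_add_right (Set.ncard_union_le _ _) _)

end Grid

/-- For a minimal generating set `S` of a transfer system on `Sub(C_{pⁿq}) ≅ [n]×[1]`,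
the numbers `T`, `B`, `D` of top, bottom, diagonal arrows satisfy `T + B ≤ n`,
`T + D ≤ n+1`, `B + D ≤ n+1`; consequently `|S| ≤ 3k+1` if `n = 2k` and
`|S| ≤ 3k+2` if `n = 2k+1`. -/
theorem grid_minimal_gen_bounds (n : ℕ)
    (T S : Set (Grid n × Grid n)) (hT : IsLatTS T) (hS : IsLatMinGen S T) :
    ({p ∈ S | IsTopArrow p}.ncard + {p ∈ S | IsBottomArrow p}.ncard ≤ n) ∧
    ({p ∈ S | IsTopArrow p}.ncard + {p ∈ S | IsDiagArrow p}.ncard ≤ n + 1) ∧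
    ({p ∈ S | IsBottomArrow p}.ncard + {p ∈ S | IsDiagArrow p}.ncard ≤ n + 1) ∧
    (∀ k, n = 2 * k → S.ncard ≤ 3 * k + 1) ∧
    (∀ k, n = 2 * k + 1 → S.ncard ≤ 3 * k + 2) := by
  have hTB := Grid.ncard_top_add_ncard_bottom_le hS.isLatIndep
  have hTD := Grid.ncard_top_add_ncard_diag_le hS.isLatIndep
  have hBD := Grid.ncard_bottom_add_ncard_diag_le hS.isLatIndep
  have hcard := Grid.ncard_le_top_add_bottom_add_diag hT hS
  exact ⟨hTB, hTD, hBD, fun k hk => by omega, fun k hk => by omega⟩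
end

section
/- Let n ≥ 2 and let SR(n+1,n) denote the number of pairs (a,x;b,y) with 0 ≤ a ≤ b ≤ n+1, 0 ≤ x ≤ y ≤ n, and a+x+b+y = 2n+1. Then SR(n+1,n) = C(n+3,3). Moreover, the number of such pairs satisfying additionally a ≥ 1 and b−a ≠ y−x (equivalently, the simple rainbow number SR(n,n) for the square grid) equals C(n+3,3) − ⌊(n+2)/2⌋·⌈(n+2)/2⌉. -/
/-- Intervals `(a, x; b, y)` in the grid `[n] × [m]` (so `0 ≤ a ≤ b ≤ n`,
`0 ≤ x ≤ y ≤ m`) whose endpoint ranks sum to `M2` (twice the midpoint).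
Here `q = (a, x, b, y)`. -/
def SRpred (n m M2 : ℕ) (q : ℕ × ℕ × ℕ × ℕ) : Prop :=
  q.1 ≤ q.2.2.1 ∧ q.2.2.1 ≤ n ∧ q.2.1 ≤ q.2.2.2 ∧ q.2.2.2 ≤ m ∧
    q.1 + q.2.1 + q.2.2.1 + q.2.2.2 = M2

open Finset

namespace SRaux

/-- The 2-dimensional simplex `p + q ≤ n`. -/
def U2 (n : ℕ) : Finset (ℕ × ℕ) :=
  (range (n + 1) ×ˢ range (n + 1)).filter fun p => p.1 + p.2 ≤ n

/-- The 3-dimensional simplex `p + q + r ≤ n`. -/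
def U3 (n : ℕ) : Finset (ℕ × ℕ × ℕ) :=
  (range (n + 1) ×ˢ range (n + 1) ×ˢ range (n + 1)).filter
    fun p => p.1 + p.2.1 + p.2.2 ≤ n

/-- The slice `p + q = m`. -/
def V2 (m : ℕ) : Finset (ℕ × ℕ) :=
  (range (m + 1) ×ˢ range (m + 1)).filter fun p => p.1 + p.2 = m

/-- The slice `p + q + r = m`. -/
def V3 (m : ℕ) : Finset (ℕ × ℕ × ℕ) :=
  (range (m + 1) ×ˢ range (m + 1) ×ˢ range (m + 1)).filter
    fun p => p.1 + p.2.1 + p.2.2 = m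

lemma card_V2 (m : ℕ) : (V2 m).card = m + 1 := by
  have : (V2 m).card = (range (m + 1)).card := by
    apply Finset.card_bij' (fun p _ => p.1) (fun k _ => (k, m - k))
    case hi =>
      rintro ⟨p, q⟩ h
      simp only [V2, mem_filter, mem_product, mem_range] at h ⊢
      omega
    case hj =>
      rintro k h
      simp only [mem_range] at h
      simp only [V2, mem_filter, mem_product, mem_range]
      omega
    case left_inv =>
      rintro ⟨p, q⟩ h
      simp only [V2, mem_filter, mem_product, mem_range] at h
      simp only [Prod.mk.injEq, true_and, and_true]
      all_goals omega
    case right_inv =>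
      rintro k h
      rfl
  simpa using this

lemma card_V3 (m : ℕ) : (V3 m).card = (U2 m).card := by
  apply Finset.card_bij' (fun p _ => (p.1, p.2.1)) (fun p _ => (p.1, p.2, m - p.1 - p.2))
  case hi =>
    rintro ⟨p, q, r⟩ h
    simp only [V3, mem_filter, mem_product, mem_range] at h
    simp only [U2, mem_filter, mem_product, mem_range]
    omega
  case hj =>
    rintro ⟨p, q⟩ h
    simp only [U2, mem_filter, mem_product, mem_range] at h
    simp only [V3, mem_filter, mem_product, mem_range]
    omega
  case left_inv =>
    rintro ⟨p, q, r⟩ h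
    simp only [V3, mem_filter, mem_product, mem_range] at h
    simp only [Prod.mk.injEq, true_and, and_true]
    all_goals omega
  case right_inv =>
    rintro ⟨p, q⟩ h
    rfl

lemma U2_succ (n : ℕ) : U2 (n + 1) = U2 n ∪ V2 (n + 1) := by
  ext ⟨p, q⟩
  simp only [U2, V2, mem_union, mem_filter, mem_product, mem_range]
  omega

lemma U3_succ (n : ℕ) : U3 (n + 1) = U3 n ∪ V3 (n + 1) := by
  ext ⟨p, q, r⟩
  simp only [U3, V3, mem_union, mem_filter, mem_product, mem_range]
  omega

lemma card_U2 (n : ℕ) : (U2 n).card = (n + 2).choose 2 := by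
  induction n with
  | zero => decide
  | succ n ih =>
    have hg : n + 1 + 2 = n + 3 := by omega
    rw [hg]
    have hdisj : Disjoint (U2 n) (V2 (n + 1)) := by
      rw [Finset.disjoint_left]
      rintro ⟨p, q⟩ h h'
      simp only [U2, mem_filter, mem_product, mem_range] at h
      simp only [V2, mem_filter, mem_product, mem_range] at h'
      omega
    rw [U2_succ, Finset.card_union_of_disjoint hdisj, ih, card_V2]
    have hp : (n + 3).choose 2 = (n + 2) + (n + 2).choose 2 := by
      rw [Nat.choose_succ_succ (n + 2) 1, Nat.choose_one_right]
    omega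

lemma card_U3 (n : ℕ) : (U3 n).card = (n + 3).choose 3 := by
  induction n with
  | zero => decide
  | succ n ih =>
    have hg : n + 1 + 3 = n + 4 := by omega
    rw [hg]
    have hdisj : Disjoint (U3 n) (V3 (n + 1)) := by
      rw [Finset.disjoint_left]
      rintro ⟨p, q, r⟩ h h'
      simp only [U3, mem_filter, mem_product, mem_range] at h
      simp only [V3, mem_filter, mem_product, mem_range] at h'
      omega
    rw [U3_succ, Finset.card_union_of_disjoint hdisj, ih, card_V3, card_U2]
    have hg2 : n + 1 + 2 = n + 3 := by omega
    rw [hg2]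
    have hp : (n + 4).choose 3 = (n + 3).choose 2 + (n + 3).choose 3 :=
      Nat.choose_succ_succ (n + 3) 2
    omega

/-- The Finset of quadruples satisfying `SRpred (n+1) n (2n+1)`. -/
def Qset (n : ℕ) : Finset (ℕ × ℕ × ℕ × ℕ) :=
  (range (n + 2) ×ˢ range (n + 1) ×ˢ range (n + 2) ×ˢ range (n + 1)).filter
    fun q => q.1 ≤ q.2.2.1 ∧ q.2.2.1 ≤ n + 1 ∧ q.2.1 ≤ q.2.2.2 ∧ q.2.2.2 ≤ n ∧
      q.1 + q.2.1 + q.2.2.1 + q.2.2.2 = 2 * n + 1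

lemma mem_Qset (n : ℕ) (q : ℕ × ℕ × ℕ × ℕ) :
    q ∈ Qset n ↔ SRpred (n + 1) n (2 * n + 1) q := by
  obtain ⟨a, x, b, y⟩ := q
  simp only [Qset, SRpred, mem_filter, mem_product, mem_range]
  omega

lemma card_Qset (n : ℕ) : (Qset n).card = (n + 3).choose 3 := by
  rw [← card_U3 n]
  symm
  apply Finset.card_bij'
    (fun t _ => if 2 * t.1 + t.2.1 + t.2.2 < n then
        (n - t.1 - t.2.1 - t.2.2, t.2.1, n - t.1 - t.2.1, t.2.1 + t.2.2 + 2 * t.1 + 1)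
      else (t.2.1, t.1, 2 * n + 1 - 2 * t.1 - t.2.1 - t.2.2, t.1 + t.2.2))
    (fun q _ => if q.2.2.1 - q.1 < q.2.2.2 - q.2.1 then
        ((q.2.2.2 - q.2.1 - (q.2.2.1 - q.1) - 1) / 2, q.2.1, q.2.2.1 - q.1)
      else (q.2.1, q.1, q.2.2.2 - q.2.1))
  case hi =>
    rintro ⟨p, q, r⟩ h
    simp only [U3, mem_filter, mem_product, mem_range] at h
    by_cases hc : 2 * p + q + r < n
    · rw [if_pos hc]
      simp only [Qset, mem_filter, mem_product, mem_range]
      omega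
    · rw [if_neg hc]
      simp only [Qset, mem_filter, mem_product, mem_range]
      omega
  case hj =>
    rintro ⟨a, x, b, y⟩ h
    simp only [Qset, mem_filter, mem_product, mem_range] at h
    by_cases hc : b - a < y - x
    · rw [if_pos hc]
      simp only [U3, mem_filter, mem_product, mem_range]
      omega
    · rw [if_neg hc]
      simp only [U3, mem_filter, mem_product, mem_range]
      omega
  case left_inv =>
    rintro ⟨p, q, r⟩ h
    simp only [U3, mem_filter, mem_product, mem_range] at h
    by_cases hc : 2 * p + q + r < n
    · rw [if_pos hc]
      dsimp only
      rw [if_pos (show (n - p - q - r, q, n - p - q, q + r + 2 * p + 1).2.2.1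
            - (n - p - q - r, q, n - p - q, q + r + 2 * p + 1).1
          < (n - p - q - r, q, n - p - q, q + r + 2 * p + 1).2.2.2
            - (n - p - q - r, q, n - p - q, q + r + 2 * p + 1).2.1 by dsimp only; omega)]
      simp only [Prod.mk.injEq, true_and, and_true]
      all_goals omega
    · rw [if_neg hc]
      dsimp only
      rw [if_neg (show ¬((q, p, 2 * n + 1 - 2 * p - q - r, p + r).2.2.1
            - (q, p, 2 * n + 1 - 2 * p - q - r, p + r).1
          < (q, p, 2 * n + 1 - 2 * p - q - r, p + r).2.2.2
            - (q, p, 2 * n + 1 - 2 * p - q - r, p + r).2.1) by dsimp only; omega)]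
      simp only [Prod.mk.injEq, true_and, and_true]
      all_goals omega
  case right_inv =>
    rintro ⟨a, x, b, y⟩ h
    simp only [Qset, mem_filter, mem_product, mem_range] at h
    by_cases hc : b - a < y - x
    · rw [if_pos hc]
      dsimp only
      rw [if_pos (show 2 * ((y - x - (b - a) - 1) / 2, x, b - a).1
          + ((y - x - (b - a) - 1) / 2, x, b - a).2.1
          + ((y - x - (b - a) - 1) / 2, x, b - a).2.2 < n by dsimp only; omega)]
      simp only [Prod.mk.injEq, true_and, and_true]
      all_goals omega
    · rw [if_neg hc]
      dsimp only
      rw [if_neg (show ¬(2 * (x, a, y - x).1 + (x, a, y - x).2.1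
          + (x, a, y - x).2.2 < n) by dsimp only; omega)]
      simp only [Prod.mk.injEq, true_and, and_true]
      all_goals omega

lemma card_Qset_a0 (n : ℕ) :
    ((Qset n).filter fun q => ¬ 1 ≤ q.1).card = ((n + 2) / 2) * ((n + 3) / 2) := by
  have key : ((Qset n).filter fun q => ¬ 1 ≤ q.1).card
      = (range ((n + 3) / 2) ×ˢ range ((n + 2) / 2)).card := by
    apply Finset.card_bij'
      (fun q _ => if q.2.2.1 % 2 = 0 then (q.2.2.1 / 2, (q.2.2.2 - q.2.1) / 2)
        else ((q.2.2.2 - q.2.1) / 2, q.2.2.1 / 2))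
      (fun p _ => if 2 * p.2 + 1 < 2 * p.1 then
          ((0 : ℕ), n - p.1 - p.2, 2 * p.1, n - p.1 + p.2 + 1)
        else ((0 : ℕ), n - p.1 - p.2, 2 * p.2 + 1, n + p.1 - p.2))
    case hi =>
      rintro ⟨a, x, b, y⟩ h
      simp only [Qset, mem_filter, mem_product, mem_range] at h
      by_cases hc : b % 2 = 0
      · rw [if_pos hc]
        simp only [mem_product, mem_range]
        omega
      · rw [if_neg hc]
        simp only [mem_product, mem_range]
        omega
    case hj =>
      rintro ⟨i, j⟩ h
      simp only [mem_product, mem_range] at h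
      by_cases hc : 2 * j + 1 < 2 * i
      · rw [if_pos hc]
        simp only [Qset, mem_filter, mem_product, mem_range]
        omega
      · rw [if_neg hc]
        simp only [Qset, mem_filter, mem_product, mem_range]
        omega
    case left_inv =>
      rintro ⟨a, x, b, y⟩ h
      simp only [Qset, mem_filter, mem_product, mem_range] at h
      by_cases hc : b % 2 = 0
      · rw [if_pos hc]
        dsimp only
        rw [if_pos (show 2 * ((y - x) / 2) + 1 < 2 * (b / 2) by omega)]
        simp only [Prod.mk.injEq, true_and, and_true]
        all_goals omega
      · rw [if_neg hc]
        dsimp only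
        rw [if_neg (show ¬(2 * (b / 2) + 1 < 2 * ((y - x) / 2)) by omega)]
        simp only [Prod.mk.injEq, true_and, and_true]
        all_goals omega
    case right_inv =>
      rintro ⟨i, j⟩ h
      simp only [mem_product, mem_range] at h
      by_cases hc : 2 * j + 1 < 2 * i
      · rw [if_pos hc]
        dsimp only
        rw [if_pos (show (2 * i) % 2 = 0 by omega)]
        simp only [Prod.mk.injEq, true_and, and_true]
        all_goals omega
      · rw [if_neg hc]
        dsimp only
        rw [if_neg (show ¬((2 * j + 1) % 2 = 0) by omega)]
        simp only [Prod.mk.injEq, true_and, and_true]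
        all_goals omega
  rw [key, Finset.card_product, Finset.card_range, Finset.card_range]
  ring

end SRaux

/-- The simple rainbow number `SR(n+1, n)` equals `C(n+3, 3)`; moreover the number of
such intervals with `a ≥ 1` and slope `≠ 1` (the simple rainbow number `SR(n, n)` of the
square grid) equals `C(n+3, 3) − ⌊(n+2)/2⌋·⌈(n+2)/2⌉`. -/
theorem simple_rainbow_counts (n : ℕ) (hn : 2 ≤ n) :
    Nat.card {q : ℕ × ℕ × ℕ × ℕ // SRpred (n + 1) n (2 * n + 1) q} =
      (n + 3).choose 3 ∧
    Nat.card {q : ℕ × ℕ × ℕ × ℕ // SRpred (n + 1) n (2 * n + 1) q ∧ 1 ≤ q.1 ∧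
        q.2.2.1 - q.1 ≠ q.2.2.2 - q.2.1} =
      (n + 3).choose 3 - ((n + 2) / 2) * ((n + 3) / 2) := by
  classical
  have h1 : Nat.card {q : ℕ × ℕ × ℕ × ℕ // SRpred (n + 1) n (2 * n + 1) q} =
      (SRaux.Qset n).card := by
    rw [Nat.card_congr (Equiv.subtypeEquivRight fun q => (SRaux.mem_Qset n q).symm)]
    rw [Nat.card_eq_fintype_card, Fintype.card_coe]
  have h2 : Nat.card {q : ℕ × ℕ × ℕ × ℕ // SRpred (n + 1) n (2 * n + 1) q ∧ 1 ≤ q.1 ∧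
      q.2.2.1 - q.1 ≠ q.2.2.2 - q.2.1} = ((SRaux.Qset n).filter fun q => 1 ≤ q.1).card := by
    have hiff : ∀ q : ℕ × ℕ × ℕ × ℕ,
        (SRpred (n + 1) n (2 * n + 1) q ∧ 1 ≤ q.1 ∧ q.2.2.1 - q.1 ≠ q.2.2.2 - q.2.1) ↔
        q ∈ (SRaux.Qset n).filter fun q => 1 ≤ q.1 := by
      intro q
      rw [Finset.mem_filter, SRaux.mem_Qset]
      obtain ⟨a, x, b, y⟩ := q
      simp only [SRpred]
      constructor
      · rintro ⟨hp, ha, -⟩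
        exact ⟨hp, ha⟩
      · rintro ⟨hp, ha⟩
        refine ⟨hp, ha, ?_⟩
        omega
    rw [Nat.card_congr (Equiv.subtypeEquivRight hiff)]
    rw [Nat.card_eq_fintype_card, Fintype.card_coe]
  have key := Finset.card_filter_add_card_filter_not
    (s := SRaux.Qset n) (p := fun q => 1 ≤ q.1)
  rw [SRaux.card_Qset_a0 n, SRaux.card_Qset n] at key
  exact ⟨by rw [h1, SRaux.card_Qset], by rw [h2]; omega⟩
end
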